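/- arXiv:1910.09576 — 5 statements merged into one kernel-verified Lean document; each statement's English description precedes it below -/
import Mathlib

section
/- The double zeta value ζ(2,1) = ∑_{n>m≥1} 1/(n² m) equals ζ(3). -/
open scoped BigOperators

/-- Riemann zeta value at a positive integer `s`. -/
noncomputable def zetaV (s : ℕ) : ℝ := ∑' n : ℕ, 1 / (n + 1 : ℝ) ^ s

/-- Double zeta value `ζ(s₁, s₂) = ∑_{n > m ≥ 1} 1/(n^{s₁} m^{s₂})`. -/
noncomputable def dzeta (s₁ s₂ : ℕ) : ℝ :=
  ∑' p : {q : ℕ × ℕ // q.2 < q.1 ∧ 1 ≤ q.2},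
    1 / (((p : ℕ × ℕ).1 : ℝ) ^ s₁ * ((p : ℕ × ℕ).2 : ℝ) ^ s₂)

/-- The `n`-th harmonic number `H_n = ∑_{m=1}^n 1/m`. -/
noncomputable def harmonic1 (n : ℕ) : ℝ := ∑ m ∈ Finset.range n, 1 / (m + 1 : ℝ)

/-- The generalized harmonic number `H_{n,2} = ∑_{m=1}^n 1/m²`. -/
noncomputable def harmonic2 (n : ℕ) : ℝ := ∑ m ∈ Finset.range n, 1 / (m + 1 : ℝ) ^ 2

namespace Stmt0Aux

abbrev P := {q : ℕ × ℕ // q.2 < q.1 ∧ 1 ≤ q.2}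

noncomputable def g (p : P) : ℝ :=
  1 / (((p : ℕ × ℕ).1 : ℝ) ^ (2 : ℕ) * ((p : ℕ × ℕ).2 : ℝ) ^ (1 : ℕ))

noncomputable def f1 (p : ℕ × ℕ) : ℝ :=
  1 / (((p.1 : ℝ) + (p.2 : ℝ) + 2) ^ 2 * ((p.2 : ℝ) + 1))

noncomputable def f2 (p : ℕ × ℕ) : ℝ :=
  1 / (((p.1 : ℝ) + 1) * ((p.2 : ℝ) + 1) * ((p.1 : ℝ) + (p.2 : ℝ) + 2))

def e1 : ℕ × ℕ ≃ P where
  toFun p := ⟨(p.1 + p.2 + 2, p.2 + 1), by omega⟩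
  invFun q := (q.1.1 - q.1.2 - 1, q.1.2 - 1)
  left_inv p := by obtain ⟨j, k⟩ := p; simp only [Prod.mk.injEq]; omega
  right_inv q := by
    obtain ⟨⟨n, m⟩, h⟩ := q
    simp only [Subtype.mk.injEq, Prod.mk.injEq]
    omega

def e2 : (Σ j : ℕ, Fin j) ≃ P where
  toFun s := ⟨(s.1 + 1, s.2 + 1), by obtain ⟨j, i⟩ := s; exact ⟨by omega, by omega⟩⟩
  invFun q := ⟨q.1.1 - 1, ⟨q.1.2 - 1, by omega⟩⟩
  left_inv s := by
    obtain ⟨j, i⟩ := s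
    simp
  right_inv q := by
    obtain ⟨⟨n, m⟩, h⟩ := q
    simp only [Subtype.mk.injEq, Prod.mk.injEq]
    omega

lemma g_e1 (p : ℕ × ℕ) : g (e1 p) = f1 p := by
  obtain ⟨j, k⟩ := p
  simp only [g, f1, e1, Equiv.coe_fn_mk]
  push_cast
  ring_nf

lemma sum_shift_rpow : Summable (fun n : ℕ => 1 / ((n : ℝ) + 1) ^ (3/2 : ℝ)) := by
  have h : Summable (fun n : ℕ => 1 / (n : ℝ) ^ (3/2 : ℝ)) :=
    Real.summable_one_div_nat_rpow.2 (by norm_num)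
  have := (summable_nat_add_iff 1).2 h
  refine this.congr fun n => ?_
  push_cast
  ring_nf

lemma bound_key {x y : ℝ} (hx : 1 ≤ x) (hy : 1 ≤ y) :
    1 / (x * y * (x + y)) ≤ (1 / x ^ (3/2 : ℝ)) * (1 / y ^ (3/2 : ℝ)) := by
  have hx0 : (0:ℝ) < x := by linarith
  have hy0 : (0:ℝ) < y := by linarith
  rw [div_mul_div_comm, one_mul, ← Real.mul_rpow hx0.le hy0.le]
  rw [div_le_div_iff₀ (by positivity) (by positivity)]
  have h32 : (x*y) ^ (3/2:ℝ) = (x*y) * Real.sqrt (x*y) := by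
    rw [show (3/2:ℝ) = 1 + 1/2 by norm_num, Real.rpow_add (by positivity), Real.rpow_one,
      Real.sqrt_eq_rpow]
  have h1 : Real.sqrt (x*y) ≤ x + y := by
    rw [show x + y = Real.sqrt ((x+y)^2) by rw [Real.sqrt_sq (by positivity)]]
    exact Real.sqrt_le_sqrt (by nlinarith)
  rw [h32]
  nlinarith [mul_le_mul_of_nonneg_left h1 (by positivity : (0:ℝ) ≤ x*y)]

lemma summable_f2 : Summable f2 := by
  refine Summable.of_nonneg_of_le (fun p => by unfold f2; positivity) (fun p => ?_)
    (sum_shift_rpow.mul_of_nonneg sum_shift_rpow (fun n => by positivity)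
      (fun n => by positivity))
  have h1 : (1:ℝ) ≤ (p.1:ℝ) + 1 := by linarith [Nat.cast_nonneg (α := ℝ) p.1]
  have h2 : (1:ℝ) ≤ (p.2:ℝ) + 1 := by linarith [Nat.cast_nonneg (α := ℝ) p.2]
  have := bound_key h1 h2
  unfold f2
  convert this using 3
  ring

lemma summable_f1 : Summable f1 := by
  refine summable_f2.of_nonneg_of_le (fun p => by unfold f1; positivity) (fun p => ?_)
  obtain ⟨j, k⟩ := p
  have hj : (0:ℝ) ≤ (j:ℝ) := Nat.cast_nonneg j
  have hk : (0:ℝ) ≤ (k:ℝ) := Nat.cast_nonneg k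
  unfold f1 f2
  dsimp only
  apply one_div_le_one_div_of_le (by positivity)
  have key : (0:ℝ) ≤ ((k:ℝ)+1)*((k:ℝ)+1)*((j:ℝ)+(k:ℝ)+2) := by positivity
  nlinarith [key]

lemma pf_pt (p : ℕ × ℕ) : f2 p = f1 p + f1 p.swap := by
  obtain ⟨j, k⟩ := p
  have hj : (0:ℝ) ≤ (j:ℝ) := Nat.cast_nonneg j
  have hk : (0:ℝ) ≤ (k:ℝ) := Nat.cast_nonneg k
  simp only [f1, f2, Prod.swap_prod_mk]
  field_simp
  ring

lemma telescope (j : ℕ) :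
    HasSum (fun k : ℕ => 1 / (((k : ℝ) + 1) * ((j : ℝ) + (k : ℝ) + 2)))
      (harmonic1 (j + 1) / ((j : ℝ) + 1)) := by
  have hj : (0:ℝ) < (j:ℝ) + 1 := by positivity
  rw [hasSum_iff_tendsto_nat_of_nonneg (fun k => by positivity)]
  have key : ∀ N : ℕ, ∑ k ∈ Finset.range N, 1 / (((k : ℝ) + 1) * ((j : ℝ) + (k : ℝ) + 2))
      = (harmonic1 (j + 1) - ∑ i ∈ Finset.range (j + 1), 1 / ((N : ℝ) + (i : ℝ) + 1))
        / ((j : ℝ) + 1) := by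
    intro N
    have e1 : ∀ k : ℕ, 1 / (((k : ℝ) + 1) * ((j : ℝ) + (k : ℝ) + 2))
        = (1 / ((k : ℝ) + 1) - 1 / ((j : ℝ) + (k : ℝ) + 2)) / ((j : ℝ) + 1) := by
      intro k
      have hk : (0:ℝ) < (k:ℝ) + 1 := by positivity
      have hjk : (0:ℝ) < (j:ℝ) + (k:ℝ) + 2 := by positivity
      field_simp
      ring
    rw [Finset.sum_congr rfl (fun k _ => e1 k), ← Finset.sum_div, Finset.sum_sub_distrib]
    congr 1
    have hA : ∑ k ∈ Finset.range N, 1 / ((j : ℝ) + (k : ℝ) + 2)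
        = harmonic1 (j + 1 + N) - harmonic1 (j + 1) := by
      unfold harmonic1
      rw [Finset.sum_range_add, add_sub_cancel_left]
      exact Finset.sum_congr rfl fun x _ => by push_cast; ring_nf
    have hB : harmonic1 (N + (j + 1))
        = harmonic1 N + ∑ i ∈ Finset.range (j+1), 1 / ((N : ℝ) + (i : ℝ) + 1) := by
      unfold harmonic1
      rw [Finset.sum_range_add]
      congr 1
      exact Finset.sum_congr rfl fun x _ => by push_cast; ring_nf
    have hN : ∑ k ∈ Finset.range N, 1 / ((k : ℝ) + 1) = harmonic1 N := rfl
    rw [hN, hA, show j + 1 + N = N + (j + 1) by ring, hB]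
    ring
  simp only [key]
  have htail : Filter.Tendsto
      (fun N : ℕ => ∑ i ∈ Finset.range (j + 1), 1 / ((N : ℝ) + (i : ℝ) + 1))
      Filter.atTop (nhds 0) := by
    rw [show (0:ℝ) = ∑ i ∈ Finset.range (j+1), (0:ℝ) by simp]
    refine tendsto_finset_sum _ fun i _ => ?_
    have h : Filter.Tendsto (fun N : ℕ => ((N:ℝ) + (i:ℝ) + 1)) Filter.atTop Filter.atTop :=
      Filter.tendsto_atTop_add_const_right _ _
        (Filter.tendsto_atTop_add_const_right _ _ tendsto_natCast_atTop_atTop)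
    simp only [one_div]
    exact h.inv_tendsto_atTop
  have := ((tendsto_const_nhds (x := harmonic1 (j+1))
    (f := Filter.atTop (α := ℕ))).sub htail).div_const ((j:ℝ)+1)
  simpa using this

lemma dzeta_g : dzeta 2 1 = ∑' p : P, g p := rfl

lemma summable_g : Summable g :=
  e1.summable_iff.mp (summable_f1.congr fun p => (g_e1 p).symm)

lemma inner_eq (j : ℕ) :
    ∑' i : Fin j, g (e2 ⟨j, i⟩) = harmonic1 j / ((j : ℝ) + 1) ^ 2 := by
  rw [tsum_fintype]
  have hterm : ∀ i : Fin j, g (e2 ⟨j, i⟩)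
      = (1 / ((j : ℝ) + 1) ^ 2) * (1 / ((i : ℝ) + 1)) := by
    intro i
    simp only [g, e2, Equiv.coe_fn_mk]
    push_cast
    rw [pow_one, div_mul_div_comm, one_mul]
  rw [Finset.sum_congr rfl (fun i _ => hterm i), ← Finset.mul_sum,
    Fin.sum_univ_eq_sum_range (fun m => 1 / ((m : ℝ) + 1))]
  unfold harmonic1
  ring

lemma step1 : dzeta 2 1 = ∑' j : ℕ, harmonic1 j / ((j : ℝ) + 1) ^ 2 := by
  rw [dzeta_g, ← e2.tsum_eq g]
  have hs : Summable (fun s : (Σ j : ℕ, Fin j) => g (e2 s)) := e2.summable_iff.2 summable_g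
  rw [Summable.tsum_sigma hs]
  exact tsum_congr inner_eq

lemma hsum_H : Summable (fun j : ℕ => harmonic1 j / ((j : ℝ) + 1) ^ 2) := by
  have h := (e2.summable_iff.2 summable_g).sigma
  exact h.congr fun j => inner_eq j

lemma hz3 : Summable (fun j : ℕ => 1 / ((j : ℝ) + 1) ^ (3 : ℕ)) := by
  have h := (summable_nat_add_iff 1).2 (Real.summable_one_div_nat_pow.2 (by norm_num : 1 < 3))
  refine h.congr fun n => ?_
  push_cast
  ring_nf

lemma euler_split :
    ∑' j : ℕ, harmonic1 (j + 1) / ((j : ℝ) + 1) ^ 2 = dzeta 2 1 + zetaV 3 := by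
  have hpt : ∀ j : ℕ, harmonic1 (j + 1) / ((j : ℝ) + 1) ^ 2
      = harmonic1 j / ((j : ℝ) + 1) ^ 2 + 1 / ((j : ℝ) + 1) ^ (3 : ℕ) := by
    intro j
    have hj : ((j : ℝ) + 1) ≠ 0 := by positivity
    unfold harmonic1
    rw [Finset.sum_range_succ]
    field_simp
  rw [tsum_congr hpt, Summable.tsum_add hsum_H hz3, ← step1]
  rfl

lemma double_eq : ∑' p : ℕ × ℕ, f2 p = 2 * dzeta 2 1 := by
  have htsum_f1 : ∑' p : ℕ × ℕ, f1 p = dzeta 2 1 := by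
    rw [dzeta_g, ← e1.tsum_eq g]
    exact tsum_congr fun p => (g_e1 p).symm
  have hswap : ∑' p : ℕ × ℕ, f1 p.swap = dzeta 2 1 :=
    ((Equiv.prodComm ℕ ℕ).tsum_eq f1).trans htsum_f1
  have hsumswap : Summable (fun p : ℕ × ℕ => f1 p.swap) :=
    (Equiv.prodComm ℕ ℕ).summable_iff.2 summable_f1
  rw [tsum_congr pf_pt, Summable.tsum_add summable_f1 hsumswap, htsum_f1, hswap]
  ring

lemma iter_eq : ∑' p : ℕ × ℕ, f2 p = ∑' j : ℕ, harmonic1 (j + 1) / ((j : ℝ) + 1) ^ 2 := by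
  have hinner : ∀ j : ℕ, ∀ k : ℕ, f2 (j, k)
      = (1 / ((j : ℝ) + 1)) * (1 / (((k : ℝ) + 1) * ((j : ℝ) + (k : ℝ) + 2))) := by
    intro j k
    simp only [f2, one_div, mul_inv]
    ring
  have hinnersum : ∀ j : ℕ, Summable (fun k : ℕ => f2 (j, k)) := by
    intro j
    refine (((telescope j).summable).mul_left (1 / ((j : ℝ) + 1))).congr fun k => ?_
    exact (hinner j k).symm
  rw [Summable.tsum_prod' summable_f2 hinnersum]
  refine tsum_congr fun j => ?_
  have hj : ((j : ℝ) + 1) ≠ 0 := by positivity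
  calc ∑' k : ℕ, f2 (j, k)
      = ∑' k : ℕ, (1 / ((j : ℝ) + 1)) * (1 / (((k : ℝ) + 1) * ((j : ℝ) + (k : ℝ) + 2))) :=
        tsum_congr (hinner j)
    _ = (1 / ((j : ℝ) + 1)) * (harmonic1 (j + 1) / ((j : ℝ) + 1)) := by
        rw [tsum_mul_left, (telescope j).tsum_eq]
    _ = harmonic1 (j + 1) / ((j : ℝ) + 1) ^ 2 := by
        rw [div_mul_div_comm, one_mul, ← pow_two]

end Stmt0Aux

theorem stmt0 : dzeta 2 1 = zetaV 3 := by
  have h1 := Stmt0Aux.double_eq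
  rw [Stmt0Aux.iter_eq, Stmt0Aux.euler_split] at h1
  linarith
end

section
/- The double zeta value ζ(4,1) = ∑_{n>m≥1} 1/(n⁴ m) equals 2ζ(5) − ζ(2)ζ(3). -/
set_option maxHeartbeats 1000000


open scoped BigOperators

def eqSub : (ℕ × ℕ) ≃ {q : ℕ × ℕ // q.2 < q.1 ∧ 1 ≤ q.2} where
  toFun p := ⟨(p.1 + p.2 + 2, p.2 + 1), by omega, by omega⟩
  invFun q := (q.1.1 - q.1.2 - 1, q.1.2 - 1)
  left_inv p := by
    obtain ⟨a, b⟩ := p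
    simp only [Prod.mk.injEq]
    omega
  right_inv q := by
    obtain ⟨⟨n, m⟩, h1, h2⟩ := q
    simp only [Subtype.mk.injEq, Prod.mk.injEq]
    omega

noncomputable def dt (a b : ℕ) (p : ℕ × ℕ) : ℝ :=
  1 / (((p.1 : ℝ) + (p.2 : ℝ) + 2) ^ a * ((p.2 : ℝ) + 1) ^ b)

-- harmonic lemmas
-- harmonic partial sums difference
lemma harm_sub (K m : ℕ) : harmonic1 (K + m) - harmonic1 K
    = ∑ i ∈ Finset.range m, 1 / (K + i + 1 : ℝ) := by
  induction m with
  | zero => simp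
  | succ m ih =>
    rw [Finset.sum_range_succ, ← ih]
    have : K + (m+1) = (K+m) + 1 := by omega
    rw [this, harmonic1, Finset.sum_range_succ, ← harmonic1]
    push_cast
    ring

lemma harm_tail_le (K m : ℕ) : harmonic1 (K + m) - harmonic1 K ≤ m / (K + 1 : ℝ) := by
  rw [harm_sub]
  calc ∑ i ∈ Finset.range m, 1 / (K + i + 1 : ℝ)
      ≤ ∑ _i ∈ Finset.range m, 1 / (K + 1 : ℝ) := by
        apply Finset.sum_le_sum
        intro i _
        apply div_le_div_of_nonneg_left one_pos.le (by positivity)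
        have : (0:ℝ) ≤ i := Nat.cast_nonneg i
        linarith
    _ = m / (K + 1 : ℝ) := by
        rw [Finset.sum_const, Finset.card_range]
        ring

lemma harm_tail_nonneg (K m : ℕ) : 0 ≤ harmonic1 (K + m) - harmonic1 K := by
  rw [harm_sub]; positivity

-- telescoping sum
lemma hasSum_inner (m : ℕ) (hm : 1 ≤ m) :
    HasSum (fun k : ℕ => 1 / (((k:ℝ) + 1) * ((k:ℝ) + 1 + m))) (harmonic1 m / m) := by
  have hmR : (0:ℝ) < m := by exact_mod_cast hm
  have hg : Summable (fun k : ℕ => 1 / ((k:ℝ)+1)^2) := by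
    have := (summable_nat_add_iff (f := fun n : ℕ => 1 / (n:ℝ)^2) 1).mpr
      (Real.summable_one_div_nat_pow.mpr one_lt_two)
    simpa using this
  have hle : ∀ k : ℕ, 1 / (((k:ℝ) + 1) * ((k:ℝ) + 1 + m)) ≤ 1 / ((k:ℝ)+1)^2 := by
    intro k
    apply one_div_le_one_div_of_le (by positivity)
    have h0 : (0:ℝ) ≤ (k:ℝ) := Nat.cast_nonneg k
    nlinarith
  have hsum : Summable (fun k : ℕ => 1 / (((k:ℝ) + 1) * ((k:ℝ) + 1 + m))) :=
    Summable.of_nonneg_of_le (fun k => by positivity) hle hg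
  rw [hsum.hasSum_iff_tendsto_nat]
  have hps : ∀ K : ℕ, ∑ k ∈ Finset.range K, 1 / (((k:ℝ) + 1) * ((k:ℝ) + 1 + m))
      = (harmonic1 m - (harmonic1 (K + m) - harmonic1 K)) / m := by
    intro K
    induction K with
    | zero => simp [harmonic1]
    | succ K ih =>
      rw [Finset.sum_range_succ, ih]
      have h2 : harmonic1 (K + 1 + m) = harmonic1 (K + m) + 1/((K:ℝ)+m+1) := by
        have : K + 1 + m = (K + m) + 1 := by omega
        rw [this, harmonic1, Finset.sum_range_succ, ← harmonic1]
        push_cast; ring_nf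
      have h3 : harmonic1 (K + 1) = harmonic1 K + 1/((K:ℝ)+1) := by
        rw [harmonic1, Finset.sum_range_succ, ← harmonic1]
      rw [h2, h3]
      have hK : (0:ℝ) < (K:ℝ) + 1 := by positivity
      have hKm : (0:ℝ) < (K:ℝ) + m + 1 := by positivity
      field_simp
      ring
  simp only [hps]
  have htail : Filter.Tendsto (fun K : ℕ => harmonic1 (K + m) - harmonic1 K)
      Filter.atTop (nhds 0) := by
    apply squeeze_zero (fun K => harm_tail_nonneg K m) (fun K => harm_tail_le K m)
    have := tendsto_one_div_add_atTop_nhds_zero_nat (𝕜 := ℝ)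
    have h := this.const_mul (m:ℝ)
    simp only [mul_one_div] at h
    convert h using 2 with K
    push_cast; ring_nf
  have : Filter.Tendsto (fun K : ℕ => (harmonic1 m - (harmonic1 (K + m) - harmonic1 K)) / m)
      Filter.atTop (nhds ((harmonic1 m - 0) / m)) :=
    (Filter.Tendsto.const_sub _ htail).div_const m
  simpa using this

lemma dt_nonneg (a b : ℕ) (p : ℕ × ℕ) : 0 ≤ dt a b p := by
  unfold dt; positivity

lemma dzeta_eq (a b : ℕ) : dzeta a b = ∑' p : ℕ × ℕ, dt a b p := by
  rw [dzeta, ← eqSub.tsum_eq]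
  apply tsum_congr
  intro p
  simp only [eqSub, Equiv.coe_fn_mk, dt]
  push_cast
  ring_nf

lemma summable_shift (s : ℕ) (hs : 1 < s) : Summable (fun n : ℕ => 1 / ((n : ℝ) + 1) ^ s) := by
  have := (summable_nat_add_iff (f := fun n : ℕ => 1 / (n : ℝ) ^ s) 1).mpr
    (Real.summable_one_div_nat_pow.mpr hs)
  simpa using this

lemma zetaV_nonneg (s : ℕ) : 0 ≤ zetaV s :=
  tsum_nonneg (fun n => by positivity)

lemma Z_bridge (s : ℕ) (hs : 1 < s) :
    ∑' n : ℕ, ENNReal.ofReal (1 / ((n : ℝ) + 1) ^ s) = ENNReal.ofReal (zetaV s) := by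
  rw [zetaV, ENNReal.ofReal_tsum_of_nonneg (fun n => by positivity) (summable_shift s hs)]

lemma summable_dt41 : Summable (dt 4 1) := by
  have hf : Summable (fun n : ℕ => 1 / ((n : ℝ) + 1) ^ 2) := summable_shift 2 one_lt_two
  have hg : Summable (fun p : ℕ × ℕ => (1 / ((p.1 : ℝ) + 1) ^ 2) * (1 / ((p.2 : ℝ) + 1) ^ 2)) :=
    hf.mul_of_nonneg hf (fun n => by positivity) (fun n => by positivity)
  have hle : ∀ p : ℕ × ℕ, dt 4 1 p ≤ (1 / ((p.1 : ℝ) + 1) ^ 2) * (1 / ((p.2 : ℝ) + 1) ^ 2) := by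
    intro ⟨k, j⟩
    have h0 : (0:ℝ) ≤ (k:ℝ) := Nat.cast_nonneg k
    have h1 : (0:ℝ) ≤ (j:ℝ) := Nat.cast_nonneg j
    have key : ((k:ℝ)+1)^2 * ((j:ℝ)+1)^2 ≤ ((k:ℝ)+(j:ℝ)+2)^4 * ((j:ℝ)+1)^1 := by
      have h2 : ((k:ℝ)+1) * ((j:ℝ)+1) ≤ ((k:ℝ)+(j:ℝ)+2)^2 := by nlinarith
      have h3 : (((k:ℝ)+1) * ((j:ℝ)+1))^2 ≤ (((k:ℝ)+(j:ℝ)+2)^2)^2 :=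
        pow_le_pow_left₀ (by positivity) h2 2
      calc ((k:ℝ)+1)^2 * ((j:ℝ)+1)^2 = (((k:ℝ)+1) * ((j:ℝ)+1))^2 * 1 := by ring
        _ ≤ (((k:ℝ)+(j:ℝ)+2)^2)^2 * ((j:ℝ)+1)^1 := by
            apply mul_le_mul h3 (by simp) one_pos.le (by positivity)
        _ = ((k:ℝ)+(j:ℝ)+2)^4 * ((j:ℝ)+1)^1 := by ring
    rw [dt, one_div, one_div, one_div, ← mul_inv]
    exact inv_anti₀ (by positivity) key
  exact Summable.of_nonneg_of_le (dt_nonneg 4 1) hle hg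

lemma X_bridge : ∑' p : ℕ × ℕ, ENNReal.ofReal (dt 4 1 p) = ENNReal.ofReal (dzeta 4 1) := by
  rw [dzeta_eq, ENNReal.ofReal_tsum_of_nonneg (dt_nonneg 4 1) summable_dt41]

lemma antidiag_sum (n : ℕ) :
    ∑ p ∈ Finset.HasAntidiagonal.antidiagonal n, dt 4 1 p = harmonic1 (n + 1) / ((n : ℝ) + 2) ^ 4 := by
  rw [Finset.Nat.sum_antidiagonal_eq_sum_range_succ_mk]
  have hterm : ∀ k ∈ Finset.range (n + 1),
      dt 4 1 (k, n - k) = 1 / ((n : ℝ) + 2) ^ 4 * (1 / (((n - k : ℕ) : ℝ) + 1)) := by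
    intro k hk
    have hkn : k ≤ n := Nat.lt_succ_iff.mp (Finset.mem_range.mp hk)
    rw [dt]
    have hc : ((k : ℝ) + ((n - k : ℕ) : ℝ) + 2) = (n : ℝ) + 2 := by
      rw [Nat.cast_sub hkn]; ring
    rw [hc, pow_one, one_div, mul_inv, one_div, one_div]
  rw [Finset.sum_congr rfl hterm, ← Finset.mul_sum]
  have hrefl := Finset.sum_range_reflect (fun j : ℕ => 1 / ((j : ℝ) + 1)) (n + 1)
  simp only [Nat.add_sub_cancel] at hrefl
  rw [hrefl, ← harmonic1]
  ring

lemma X_group : ∑' p : ℕ × ℕ, ENNReal.ofReal (dt 4 1 p)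
    = ∑' n : ℕ, ENNReal.ofReal (harmonic1 (n + 1) / ((n : ℝ) + 2) ^ 4) := by
  rw [← Finset.HasAntidiagonal.sigmaAntidiagonalEquivProd.tsum_eq
    (fun p : ℕ × ℕ => ENNReal.ofReal (dt 4 1 p)), ENNReal.tsum_sigma']
  apply tsum_congr
  intro n
  simp only [Finset.HasAntidiagonal.sigmaAntidiagonalEquivProd, Equiv.coe_fn_mk]
  rw [Finset.tsum_subtype (Finset.HasAntidiagonal.antidiagonal n) (fun p => ENNReal.ofReal (dt 4 1 p)),
    ← ENNReal.ofReal_sum_of_nonneg (fun p _ => dt_nonneg 4 1 p), antidiag_sum]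

lemma harmonic1_nonneg (n : ℕ) : 0 ≤ harmonic1 n := by
  unfold harmonic1; positivity

lemma shift_harm : ∑' j : ℕ, ENNReal.ofReal (harmonic1 j / ((j:ℝ)+1)^4)
    = ∑' n : ℕ, ENNReal.ofReal (harmonic1 (n+1) / ((n:ℝ)+2)^4) := by
  have hsupp : Function.support (fun j : ℕ => ENNReal.ofReal (harmonic1 j / ((j:ℝ)+1)^4))
      ⊆ Set.range Nat.succ := by
    intro x hx
    rcases Nat.eq_zero_or_pos x with h0 | h0
    · exfalso; apply hx; simp [h0, harmonic1]
    · exact ⟨x - 1, by omega⟩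
  have h := Function.Injective.tsum_eq (g := Nat.succ) Nat.succ_injective
    (f := fun j : ℕ => ENNReal.ofReal (harmonic1 j / ((j:ℝ)+1)^4)) hsupp
  rw [← h]
  apply tsum_congr
  intro n
  simp only [Nat.succ_eq_add_one]
  congr 2
  push_cast
  ring

lemma T_inner (j : ℕ) : ∑' k : ℕ, ENNReal.ofReal (1 / (((k:ℝ)+1) * ((k:ℝ)+(j:ℝ)+2)))
    = ENNReal.ofReal (harmonic1 (j+1) / ((j:ℝ)+1)) := by
  have h := hasSum_inner (j+1) (Nat.le_add_left 1 j)
  have h2 : HasSum (fun k : ℕ => 1/(((k:ℝ)+1)*((k:ℝ)+(j:ℝ)+2))) (harmonic1 (j+1)/((j:ℝ)+1)) := by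
    have e1 : ∀ k : ℕ, 1/(((k:ℝ)+1)*((k:ℝ)+1+((j+1:ℕ):ℝ))) = 1/(((k:ℝ)+1)*((k:ℝ)+(j:ℝ)+2)) := by
      intro k; push_cast; ring_nf
    have e2 : harmonic1 (j+1) / ((j+1:ℕ):ℝ) = harmonic1 (j+1)/((j:ℝ)+1) := by push_cast; ring_nf
    rw [← e2, ← funext e1]
    exact h
  rw [← ENNReal.ofReal_tsum_of_nonneg (fun k => by positivity) h2.summable, h2.tsum_eq]

lemma T_eq : (∑' p : ℕ × ℕ, ENNReal.ofReal (1 / (((p.2:ℝ)+1)^3 * ((((p.1:ℝ)+(p.2:ℝ)+2)) * ((p.1:ℝ)+1)))))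
    = (∑' p : ℕ × ℕ, ENNReal.ofReal (dt 4 1 p)) + ∑' n : ℕ, ENNReal.ofReal (1/((n:ℝ)+1)^5) := by
  rw [ENNReal.tsum_prod', ENNReal.tsum_comm]
  have hJ : ∀ j : ℕ, (∑' k : ℕ, ENNReal.ofReal (1 / (((j:ℝ)+1)^3 * ((((k:ℝ)+(j:ℝ)+2)) * ((k:ℝ)+1)))))
      = ENNReal.ofReal (harmonic1 (j+1) / ((j:ℝ)+1)^4) := by
    intro j
    have e1 : ∀ k : ℕ, (1 / (((j:ℝ)+1)^3 * ((((k:ℝ)+(j:ℝ)+2)) * ((k:ℝ)+1))))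
        = (1/((j:ℝ)+1)^3) * (1 / (((k:ℝ)+1) * ((k:ℝ)+(j:ℝ)+2))) := by
      intro k
      rw [one_div, one_div, one_div, mul_inv, mul_inv, mul_inv]
      ring
    simp only [e1]
    simp only [ENNReal.ofReal_mul (show (0:ℝ) ≤ 1/((j:ℝ)+1)^3 by positivity)]
    rw [ENNReal.tsum_mul_left, T_inner j,
      ← ENNReal.ofReal_mul (show (0:ℝ) ≤ 1/((j:ℝ)+1)^3 by positivity)]
    rw [div_mul_div_comm, one_mul, ← pow_succ]
  rw [tsum_congr hJ]
  have hsplit : ∀ j : ℕ, ENNReal.ofReal (harmonic1 (j+1) / ((j:ℝ)+1)^4)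
      = ENNReal.ofReal (harmonic1 j / ((j:ℝ)+1)^4) + ENNReal.ofReal (1/((j:ℝ)+1)^5) := by
    intro j
    rw [← ENNReal.ofReal_add (div_nonneg (harmonic1_nonneg j) (by positivity)) (by positivity)]
    congr 1
    rw [harmonic1, Finset.sum_range_succ, ← harmonic1]
    have hj : ((j:ℝ)+1) ≠ 0 := by positivity
    field_simp
  rw [tsum_congr hsplit, ENNReal.tsum_add, shift_harm, ← X_group]

lemma pointwise (k j : ℕ) :
    dt 2 3 (k,j) + dt 3 2 (k,j) + dt 4 1 (k,j) + 1 / ((((k:ℝ)+(j:ℝ)+2)^4) * ((k:ℝ)+1))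
    = 1 / (((j:ℝ)+1)^3 * ((((k:ℝ)+(j:ℝ)+2)) * ((k:ℝ)+1))) := by
  have hM : ((j:ℝ)+1) ≠ 0 := by positivity
  have hK : ((k:ℝ)+1) ≠ 0 := by positivity
  have hN : ((k:ℝ)+(j:ℝ)+2) ≠ 0 := by positivity
  simp only [dt]
  field_simp
  ring

lemma X'_eq : (∑' p : ℕ × ℕ, ENNReal.ofReal (1 / ((((p.1:ℝ)+(p.2:ℝ)+2)^4) * ((p.1:ℝ)+1))))
    = ∑' p : ℕ × ℕ, ENNReal.ofReal (dt 4 1 p) := by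
  rw [← (Equiv.prodComm ℕ ℕ).tsum_eq
    (fun p : ℕ × ℕ => ENNReal.ofReal (1 / ((((p.1:ℝ)+(p.2:ℝ)+2)^4) * ((p.1:ℝ)+1))))]
  apply tsum_congr
  intro p
  simp only [Equiv.prodComm_apply, Prod.fst_swap, Prod.snd_swap, dt]
  congr 2
  ring

-- the five-series: ∑' n, ofReal (1/(n+1)^5)
noncomputable def Z5e : ENNReal := ∑' n : ℕ, ENNReal.ofReal (1/((n:ℝ)+1)^5)

lemma part_gt : (∑' p : ℕ × ℕ, if p.2 < p.1 then ENNReal.ofReal (1/(((p.1:ℝ)+1)^2 * ((p.2:ℝ)+1)^3)) else 0)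
    = ∑' p : ℕ × ℕ, ENNReal.ofReal (dt 2 3 p) := by
  have hg : Function.Injective (fun c : ℕ × ℕ => (c.1 + c.2 + 1, c.2)) := by
    intro a b hab
    simp only [Prod.mk.injEq] at hab
    obtain ⟨a1, a2⟩ := a; obtain ⟨b1, b2⟩ := b
    simp only [Prod.mk.injEq]
    omega
  have hsupp : Function.support (fun p : ℕ × ℕ =>
      if p.2 < p.1 then ENNReal.ofReal (1/(((p.1:ℝ)+1)^2 * ((p.2:ℝ)+1)^3)) else 0)
      ⊆ Set.range (fun c : ℕ × ℕ => (c.1 + c.2 + 1, c.2)) := by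
    intro p hp
    by_cases h : p.2 < p.1
    · exact ⟨(p.1 - p.2 - 1, p.2), by
        obtain ⟨p1, p2⟩ := p; dsimp only; simp only [Prod.mk.injEq]
        refine ⟨by omega, trivial⟩⟩
    · exfalso; apply hp; simp [h]
  rw [← Function.Injective.tsum_eq hg hsupp]
  apply tsum_congr
  intro c
  have hc : c.2 < c.1 + c.2 + 1 := by omega
  simp only [hc, if_true, dt]
  congr 2
  push_cast
  ring

lemma part_lt : (∑' p : ℕ × ℕ, if p.1 < p.2 then ENNReal.ofReal (1/(((p.1:ℝ)+1)^2 * ((p.2:ℝ)+1)^3)) else 0)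
    = ∑' p : ℕ × ℕ, ENNReal.ofReal (dt 3 2 p) := by
  have hg : Function.Injective (fun c : ℕ × ℕ => (c.2, c.1 + c.2 + 1)) := by
    intro a b hab
    simp only [Prod.mk.injEq] at hab
    obtain ⟨a1, a2⟩ := a; obtain ⟨b1, b2⟩ := b
    simp only [Prod.mk.injEq]
    omega
  have hsupp : Function.support (fun p : ℕ × ℕ =>
      if p.1 < p.2 then ENNReal.ofReal (1/(((p.1:ℝ)+1)^2 * ((p.2:ℝ)+1)^3)) else 0)
      ⊆ Set.range (fun c : ℕ × ℕ => (c.2, c.1 + c.2 + 1)) := by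
    intro p hp
    by_cases h : p.1 < p.2
    · exact ⟨(p.2 - p.1 - 1, p.1), by
        obtain ⟨p1, p2⟩ := p; dsimp only; simp only [Prod.mk.injEq]
        refine ⟨trivial, by omega⟩⟩
    · exfalso; apply hp; simp [h]
  rw [← Function.Injective.tsum_eq hg hsupp]
  apply tsum_congr
  intro c
  have hc : c.2 < c.1 + c.2 + 1 := by omega
  simp only [hc, if_true, dt]
  congr 2
  push_cast
  ring

lemma part_diag : (∑' p : ℕ × ℕ, if p.1 = p.2 then ENNReal.ofReal (1/(((p.1:ℝ)+1)^2 * ((p.2:ℝ)+1)^3)) else 0)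
    = Z5e := by
  have hg : Function.Injective (fun n : ℕ => ((n, n) : ℕ × ℕ)) := by
    intro a b hab
    simpa using congrArg Prod.fst hab
  have hsupp : Function.support (fun p : ℕ × ℕ =>
      if p.1 = p.2 then ENNReal.ofReal (1/(((p.1:ℝ)+1)^2 * ((p.2:ℝ)+1)^3)) else 0)
      ⊆ Set.range (fun n : ℕ => ((n, n) : ℕ × ℕ)) := by
    intro p hp
    by_cases h : p.1 = p.2
    · exact ⟨p.1, by
        obtain ⟨p1, p2⟩ := p; dsimp only; simp only [Prod.mk.injEq]
        exact ⟨trivial, by omega⟩⟩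
    · exfalso; apply hp; simp [h]
  rw [← Function.Injective.tsum_eq hg hsupp, Z5e]
  apply tsum_congr
  intro n
  simp only [if_true]
  congr 1
  rw [← pow_add]

lemma eqA : ENNReal.ofReal (zetaV 2) * ENNReal.ofReal (zetaV 3)
    = (∑' p : ℕ × ℕ, ENNReal.ofReal (dt 2 3 p)) + (∑' p : ℕ × ℕ, ENNReal.ofReal (dt 3 2 p)) + Z5e := by
  rw [← Z_bridge 2 one_lt_two, ← Z_bridge 3 (by norm_num), ← ENNReal.tsum_mul_right]
  have h1 : ∀ a : ℕ, ENNReal.ofReal (1/((a:ℝ)+1)^2) * (∑' b : ℕ, ENNReal.ofReal (1/((b:ℝ)+1)^3))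
      = ∑' b : ℕ, ENNReal.ofReal (1/(((a:ℝ)+1)^2 * ((b:ℝ)+1)^3)) := by
    intro a
    rw [← ENNReal.tsum_mul_left]
    apply tsum_congr
    intro b
    rw [← ENNReal.ofReal_mul (by positivity), div_mul_div_comm, one_mul]
  rw [tsum_congr h1, ← ENNReal.tsum_prod'
    (f := fun p : ℕ × ℕ => ENNReal.ofReal (1/(((p.1:ℝ)+1)^2 * ((p.2:ℝ)+1)^3)))]
  have hdec : ∀ p : ℕ × ℕ, ENNReal.ofReal (1/(((p.1:ℝ)+1)^2 * ((p.2:ℝ)+1)^3))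
      = (if p.2 < p.1 then ENNReal.ofReal (1/(((p.1:ℝ)+1)^2 * ((p.2:ℝ)+1)^3)) else 0)
      + (if p.1 < p.2 then ENNReal.ofReal (1/(((p.1:ℝ)+1)^2 * ((p.2:ℝ)+1)^3)) else 0)
      + (if p.1 = p.2 then ENNReal.ofReal (1/(((p.1:ℝ)+1)^2 * ((p.2:ℝ)+1)^3)) else 0) := by
    intro p
    rcases Nat.lt_trichotomy p.1 p.2 with h | h | h
    · simp [h, Nat.lt_asymm h, Nat.ne_of_lt h]
    · simp [h, lt_irrefl]
    · simp [h, Nat.lt_asymm h, (Nat.ne_of_lt h).symm]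
  rw [tsum_congr hdec, ENNReal.tsum_add, ENNReal.tsum_add, part_gt, part_lt, part_diag]

lemma eqB : (∑' p : ℕ × ℕ, ENNReal.ofReal (dt 2 3 p)) + (∑' p : ℕ × ℕ, ENNReal.ofReal (dt 3 2 p))
    + (∑' p : ℕ × ℕ, ENNReal.ofReal (dt 4 1 p)) = Z5e := by
  have hpt : ∀ p : ℕ × ℕ, ENNReal.ofReal (dt 2 3 p) + ENNReal.ofReal (dt 3 2 p)
      + ENNReal.ofReal (dt 4 1 p)
      + ENNReal.ofReal (1 / ((((p.1:ℝ)+(p.2:ℝ)+2)^4) * ((p.1:ℝ)+1)))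
      = ENNReal.ofReal (1 / (((p.2:ℝ)+1)^3 * ((((p.1:ℝ)+(p.2:ℝ)+2)) * ((p.1:ℝ)+1)))) := by
    intro p
    rw [← ENNReal.ofReal_add (dt_nonneg 2 3 p) (dt_nonneg 3 2 p),
      ← ENNReal.ofReal_add (add_nonneg (dt_nonneg 2 3 p) (dt_nonneg 3 2 p)) (dt_nonneg 4 1 p),
      ← ENNReal.ofReal_add (add_nonneg (add_nonneg (dt_nonneg 2 3 p) (dt_nonneg 3 2 p))
        (dt_nonneg 4 1 p)) (by positivity)]
    exact congrArg ENNReal.ofReal (pointwise p.1 p.2)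
  have hsum := tsum_congr (L := SummationFilter.unconditional _) hpt
  rw [ENNReal.tsum_add, ENNReal.tsum_add, ENNReal.tsum_add, X'_eq, T_eq] at hsum
  have hXne : (∑' p : ℕ × ℕ, ENNReal.ofReal (dt 4 1 p)) ≠ ⊤ := by
    rw [X_bridge]; exact ENNReal.ofReal_ne_top
  apply (ENNReal.add_right_inj hXne).mp
  calc (∑' p : ℕ × ℕ, ENNReal.ofReal (dt 4 1 p))
      + ((∑' p : ℕ × ℕ, ENNReal.ofReal (dt 2 3 p)) + (∑' p : ℕ × ℕ, ENNReal.ofReal (dt 3 2 p))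
        + (∑' p : ℕ × ℕ, ENNReal.ofReal (dt 4 1 p)))
      = (∑' p : ℕ × ℕ, ENNReal.ofReal (dt 2 3 p)) + (∑' p : ℕ × ℕ, ENNReal.ofReal (dt 3 2 p))
        + (∑' p : ℕ × ℕ, ENNReal.ofReal (dt 4 1 p)) + (∑' p : ℕ × ℕ, ENNReal.ofReal (dt 4 1 p)) := by
        ring
    _ = (∑' p : ℕ × ℕ, ENNReal.ofReal (dt 4 1 p)) + Z5e := by
        rw [hsum, Z5e]

theorem stmt2 : dzeta 4 1 = 2 * zetaV 5 - zetaV 2 * zetaV 3 := by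
  have hmain : ENNReal.ofReal (dzeta 4 1) + ENNReal.ofReal (zetaV 2) * ENNReal.ofReal (zetaV 3)
      = Z5e + Z5e := by
    rw [eqA, ← X_bridge]
    calc (∑' p : ℕ × ℕ, ENNReal.ofReal (dt 4 1 p))
        + ((∑' p : ℕ × ℕ, ENNReal.ofReal (dt 2 3 p)) + (∑' p : ℕ × ℕ, ENNReal.ofReal (dt 3 2 p)) + Z5e)
        = ((∑' p : ℕ × ℕ, ENNReal.ofReal (dt 2 3 p)) + (∑' p : ℕ × ℕ, ENNReal.ofReal (dt 3 2 p))
          + (∑' p : ℕ × ℕ, ENNReal.ofReal (dt 4 1 p))) + Z5e := by ring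
      _ = Z5e + Z5e := by rw [eqB]
  have hZ5 : Z5e = ENNReal.ofReal (zetaV 5) := Z_bridge 5 (by norm_num)
  rw [hZ5, ← ENNReal.ofReal_mul (zetaV_nonneg 2),
    ← ENNReal.ofReal_add (by rw [dzeta_eq]; exact tsum_nonneg (dt_nonneg 4 1))
      (mul_nonneg (zetaV_nonneg 2) (zetaV_nonneg 3)),
    ← ENNReal.ofReal_add (zetaV_nonneg 5) (zetaV_nonneg 5)] at hmain
  have h5 : 0 ≤ zetaV 5 := zetaV_nonneg 5
  have hfin : dzeta 4 1 + zetaV 2 * zetaV 3 = zetaV 5 + zetaV 5 := by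
    have hnn1 : 0 ≤ dzeta 4 1 + zetaV 2 * zetaV 3 := by
      have : 0 ≤ dzeta 4 1 := by rw [dzeta_eq]; exact tsum_nonneg (dt_nonneg 4 1)
      have := mul_nonneg (zetaV_nonneg 2) (zetaV_nonneg 3)
      linarith
    exact (ENNReal.ofReal_eq_ofReal_iff hnn1 (by linarith)).mp hmain
  linarith
end

section
/- The double zeta value ζ(8,1) = ∑_{n>m≥1} 1/(n⁸ m) equals 4ζ(9) − ζ(2)ζ(7) − ζ(3)ζ(6) − ζ(4)ζ(5). -/
open scoped BigOperators

open Filter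
open scoped ENNReal

namespace Stmt6Aux

noncomputable def zr (s n : ℕ) : ℝ := 1 / ((n : ℝ) + 1) ^ s

noncomputable def dr (a b m k : ℕ) : ℝ :=
  (1 / ((m : ℝ) + (k : ℝ) + 2) ^ a) * (1 / ((m : ℝ) + 1) ^ b)

lemma zr_nonneg (s n : ℕ) : 0 ≤ zr s n := by unfold zr; positivity
lemma dr_nonneg (a b m k : ℕ) : 0 ≤ dr a b m k := by unfold dr; positivity

noncomputable def Ze (s : ℕ) : ℝ≥0∞ := ∑' n : ℕ, ENNReal.ofReal (zr s n)
noncomputable def Te (a b : ℕ) : ℝ≥0∞ := ∑' (m : ℕ) (k : ℕ), ENNReal.ofReal (dr a b m k)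

lemma telesum (φ : ℕ → ℝ) (hmono : ∀ k, φ (k + 1) ≤ φ k)
    (hlim : Tendsto φ atTop (nhds 0)) :
    HasSum (fun k => φ k - φ (k + 1)) (φ 0) := by
  rw [hasSum_iff_tendsto_nat_of_nonneg (fun k => sub_nonneg.2 (hmono k))]
  have h : ∀ n, ∑ i ∈ Finset.range n, (φ i - φ (i + 1)) = φ 0 - φ n :=
    fun n => Finset.sum_range_sub' φ n
  simp only [h]
  simpa using tendsto_const_nhds.sub hlim

lemma tendsto_inv_shift (c : ℕ) :
    Tendsto (fun k : ℕ => 1 / ((k : ℝ) + (c : ℝ) + 1)) atTop (nhds 0) := by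
  have h := (tendsto_one_div_add_atTop_nhds_zero_nat (𝕜 := ℝ)).comp (tendsto_add_atTop_nat c)
  have e : (fun k : ℕ => 1 / ((k : ℝ) + (c : ℝ) + 1))
      = (fun n : ℕ => 1 / ((n : ℝ) + 1)) ∘ (fun k => k + c) := by
    funext k; simp only [Function.comp_apply]; push_cast; ring_nf
  rw [e]; exact h

lemma tele (c : ℕ) :
    HasSum (fun k : ℕ => 1 / ((k : ℝ) + (c : ℝ) + 1) - 1 / ((k : ℝ) + (c : ℝ) + 2))
      (1 / ((c : ℝ) + 1)) := by
  have h := telesum (fun k : ℕ => 1 / ((k : ℝ) + (c : ℝ) + 1))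
    (fun k => by
      apply one_div_le_one_div_of_le (by positivity)
      push_cast; linarith)
    (tendsto_inv_shift c)
  have e : (fun k : ℕ => (1 : ℝ) / ((k : ℝ) + (c : ℝ) + 1) - 1 / (((k + 1 : ℕ) : ℝ) + (c : ℝ) + 1))
      = fun k : ℕ => 1 / ((k : ℝ) + (c : ℝ) + 1) - 1 / ((k : ℝ) + (c : ℝ) + 2) := by
    funext k; push_cast; ring_nf
  rw [e] at h
  simpa using h



lemma shift (j : ℕ) (f : ℕ → ℝ≥0∞) :
    (∑' i : ℕ, if j < i then f i else 0) = ∑' k : ℕ, f (k + (j + 1)) := by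
  have hinj : Function.Injective (fun k : ℕ => k + (j + 1)) := fun a b h => by simpa using h
  have hsupp : Function.support (fun i : ℕ => if j < i then f i else 0)
      ⊆ Set.range (fun k : ℕ => k + (j + 1)) := by
    intro i hi
    by_cases h : j < i
    · exact ⟨i - (j + 1), by simp; omega⟩
    · simp [h, Function.mem_support] at hi
  have := hinj.tsum_eq (f := fun i : ℕ => if j < i then f i else 0) hsupp
  rw [← this]
  apply tsum_congr
  intro k
  rw [if_pos (by omega)]

lemma split3 (f : ℕ → ℝ≥0∞) (i : ℕ) :
    ∑' j : ℕ, f j = (∑ j ∈ Finset.range i, f j) + f i + ∑' k : ℕ, f (k + (i + 1)) := by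
  have hpt : ∀ j : ℕ, f j =
      (if j < i then f j else 0) + ((if j = i then f j else 0) + (if i < j then f j else 0)) := by
    intro j
    rcases lt_trichotomy j i with h | h | h
    · simp [h, Nat.lt_asymm h, Nat.ne_of_lt h]
    · simp [h]
    · simp [h, Nat.lt_asymm h, (Nat.ne_of_lt h).symm]
  calc ∑' j : ℕ, f j = ∑' j : ℕ, ((if j < i then f j else 0)
        + ((if j = i then f j else 0) + (if i < j then f j else 0))) := tsum_congr hpt
    _ = (∑' j : ℕ, if j < i then f j else 0) + ((∑' j : ℕ, if j = i then f j else 0)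
        + (∑' j : ℕ, if i < j then f j else 0)) := by rw [ENNReal.tsum_add, ENNReal.tsum_add]
    _ = (∑ j ∈ Finset.range i, f j) + f i + ∑' k : ℕ, f (k + (i + 1)) := by
        rw [shift, tsum_eq_sum (s := Finset.range i) (by intro b hb; rw [if_neg (by simpa using hb)]),
          tsum_eq_single i (by intro b hb; rw [if_neg hb])]
        rw [Finset.sum_congr rfl fun b hb => if_pos (by simpa using hb)]
        simp [add_assoc]

lemma tri (F : ℕ → ℕ → ℝ≥0∞) :
    ∑' (i : ℕ) (j : ℕ), (if j < i then F i j else 0)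
      = ∑' (m : ℕ) (k : ℕ), F (k + (m + 1)) m := by
  rw [ENNReal.tsum_comm]
  exact tsum_congr fun j => shift j (fun i => F i j)

lemma tri' (F : ℕ → ℕ → ℝ≥0∞) :
    ∑' (i : ℕ), ∑ j ∈ Finset.range i, F i j = ∑' (m : ℕ) (k : ℕ), F (k + (m + 1)) m := by
  rw [← tri F]
  apply tsum_congr
  intro i
  rw [tsum_eq_sum (s := Finset.range i) (by intro b hb; rw [if_neg (by simpa using hb)])]
  exact Finset.sum_congr rfl fun j hj => (if_pos (by simpa using hj)).symm

lemma zr_mul_zr (a b i : ℕ) : zr a i * zr b i = zr (a + b) i := by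
  unfold zr; rw [pow_add]; field_simp

lemma stuffle (a b : ℕ) : Ze a * Ze b = Te a b + Te b a + Ze (a + b) := by
  have hG : Ze a * Ze b = ∑' (i : ℕ) (j : ℕ), ENNReal.ofReal (zr a i * zr b j) := by
    rw [Ze, Ze, ← ENNReal.tsum_mul_right]
    apply tsum_congr; intro i
    rw [← ENNReal.tsum_mul_left]
    exact tsum_congr fun j => (ENNReal.ofReal_mul (zr_nonneg a i)).symm
  rw [hG]
  have hsplit : ∀ i : ℕ, (∑' j : ℕ, ENNReal.ofReal (zr a i * zr b j)) =
      (∑ j ∈ Finset.range i, ENNReal.ofReal (zr a i * zr b j))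
      + (ENNReal.ofReal (zr a i * zr b i)
        + ∑' k : ℕ, ENNReal.ofReal (zr a i * zr b (k + (i + 1)))) := by
    intro i
    rw [split3 (fun j => ENNReal.ofReal (zr a i * zr b j)) i]
    ring
  calc ∑' (i : ℕ) (j : ℕ), ENNReal.ofReal (zr a i * zr b j)
      = (∑' i : ℕ, ∑ j ∈ Finset.range i, ENNReal.ofReal (zr a i * zr b j))
        + ((∑' i : ℕ, ENNReal.ofReal (zr a i * zr b i))
          + ∑' (i : ℕ) (k : ℕ), ENNReal.ofReal (zr a i * zr b (k + (i + 1)))) := by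
        rw [← ENNReal.tsum_add, ← ENNReal.tsum_add]
        exact tsum_congr hsplit
    _ = Te a b + Te b a + Ze (a + b) := by
        have h1 : (∑' i : ℕ, ∑ j ∈ Finset.range i, ENNReal.ofReal (zr a i * zr b j)) = Te a b := by
          rw [tri' (fun i j => ENNReal.ofReal (zr a i * zr b j))]
          unfold Te
          apply tsum_congr; intro m; apply tsum_congr; intro k
          congr 1
          unfold zr dr; push_cast; ring
        have h2 : (∑' i : ℕ, ENNReal.ofReal (zr a i * zr b i)) = Ze (a + b) := by
          unfold Ze
          exact tsum_congr fun i => by rw [zr_mul_zr]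
        have h3 : (∑' (i : ℕ) (k : ℕ), ENNReal.ofReal (zr a i * zr b (k + (i + 1)))) = Te b a := by
          unfold Te
          apply tsum_congr; intro m; apply tsum_congr; intro k
          congr 1
          unfold zr dr; push_cast; ring
        rw [h1, h2, h3]; ring

lemma inner_le (a b m : ℕ) (ha : 2 ≤ a) (hb : 1 ≤ b) :
    (∑' k : ℕ, ENNReal.ofReal (dr a b m k)) ≤ ENNReal.ofReal (zr 2 m) := by
  set g : ℕ → ℝ := fun k =>
    (1 / ((m : ℝ) + 1)) * (1 / ((k : ℝ) + (m : ℝ) + 1) - 1 / ((k : ℝ) + (m : ℝ) + 2)) with hg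
  have hgnn : ∀ k, 0 ≤ g k := by
    intro k; rw [hg]
    have : 1 / ((k : ℝ) + (m : ℝ) + 2) ≤ 1 / ((k : ℝ) + (m : ℝ) + 1) :=
      one_div_le_one_div_of_le (by positivity) (by linarith)
    have h1 : (0:ℝ) ≤ 1 / ((m : ℝ) + 1) := by positivity
    nlinarith
  have hgsum : HasSum g ((1 / ((m : ℝ) + 1)) * (1 / ((m : ℝ) + 1))) := (tele m).mul_left _
  have hle : ∀ k, dr a b m k ≤ g k := by
    intro k
    have key : g k = (1 / (((m : ℝ) + (k : ℝ) + 1) * ((m : ℝ) + (k : ℝ) + 2)))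
        * (1 / ((m : ℝ) + 1)) := by
      rw [hg]
      have h1 : ((k : ℝ) + (m : ℝ) + 1) ≠ 0 := by positivity
      have h2 : ((k : ℝ) + (m : ℝ) + 2) ≠ 0 := by positivity
      field_simp
      ring
    rw [key]
    unfold dr
    apply mul_le_mul
    · calc 1 / ((m : ℝ) + (k : ℝ) + 2) ^ a ≤ 1 / ((m : ℝ) + (k : ℝ) + 2) ^ 2 := by
            apply one_div_le_one_div_of_le (by positivity)
            apply pow_le_pow_right₀ (by linarith) ha
      _ ≤ 1 / (((m : ℝ) + (k : ℝ) + 1) * ((m : ℝ) + (k : ℝ) + 2)) := by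
            apply one_div_le_one_div_of_le (by positivity)
            nlinarith
    · calc 1 / ((m : ℝ) + 1) ^ b ≤ 1 / ((m : ℝ) + 1) ^ 1 := by
            apply one_div_le_one_div_of_le (by positivity)
            apply pow_le_pow_right₀ (by linarith) hb
      _ = 1 / ((m : ℝ) + 1) := by rw [pow_one]
    · positivity
    · positivity
  calc (∑' k : ℕ, ENNReal.ofReal (dr a b m k)) ≤ ∑' k : ℕ, ENNReal.ofReal (g k) :=
        ENNReal.tsum_le_tsum fun k => ENNReal.ofReal_le_ofReal (hle k)
    _ = ENNReal.ofReal (∑' k : ℕ, g k) :=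
        (ENNReal.ofReal_tsum_of_nonneg hgnn hgsum.summable).symm
    _ = ENNReal.ofReal (zr 2 m) := by
        rw [hgsum.tsum_eq, one_div_mul_one_div]; unfold zr; rw [pow_two]

lemma Ze2_ne_top : Ze 2 ≠ ⊤ := by
  have h : Ze 2 ≤ ENNReal.ofReal 1 + ENNReal.ofReal 1 := by
    rw [Ze, split3 (fun n => ENNReal.ofReal (zr 2 n)) 0]
    simp only [Finset.range_zero, Finset.sum_empty, zero_add]
    apply add_le_add
    · apply ENNReal.ofReal_le_ofReal
      unfold zr; norm_num
    · have htele := tele 0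
      simp only [Nat.cast_zero, add_zero] at htele
      calc (∑' k : ℕ, ENNReal.ofReal (zr 2 (k + (0 + 1))))
          ≤ ∑' k : ℕ, ENNReal.ofReal (1 / ((k : ℝ) + 1) - 1 / ((k : ℝ) + 2)) := by
            apply ENNReal.tsum_le_tsum
            intro k
            apply ENNReal.ofReal_le_ofReal
            have hrw : 1 / ((k:ℝ) + 1) - 1 / ((k:ℝ) + 2) = 1 / (((k:ℝ) + 1) * ((k:ℝ) + 2)) := by
              rw [div_sub_div _ _ (by positivity : ((k:ℝ)+1) ≠ 0) (by positivity : ((k:ℝ)+2) ≠ 0)]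
              ring_nf
            rw [hrw]
            unfold zr
            push_cast
            apply one_div_le_one_div_of_le (by positivity)
            nlinarith [sq_nonneg ((k:ℝ))]
        _ = ENNReal.ofReal 1 := by
            rw [← ENNReal.ofReal_tsum_of_nonneg _ htele.summable, htele.tsum_eq]
            · norm_num
            · intro k
              have : 1 / ((k : ℝ) + 2) ≤ 1 / ((k : ℝ) + 1) :=
                one_div_le_one_div_of_le (by positivity) (by linarith)
              linarith
  intro hcon
  rw [hcon] at h
  simp at h

lemma Te_ne_top (a b : ℕ) (ha : 2 ≤ a) (hb : 1 ≤ b) : Te a b ≠ ⊤ := by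
  have h : Te a b ≤ Ze 2 := by
    rw [Te, Ze]
    exact ENNReal.tsum_le_tsum fun m => inner_le a b m ha hb
  exact fun hcon => Ze2_ne_top (top_le_iff.mp (hcon ▸ h))

lemma Ze_ne_top (s : ℕ) (hs : 2 ≤ s) : Ze s ≠ ⊤ := by
  have h : Ze s ≤ Ze 2 := by
    rw [Ze, Ze]
    apply ENNReal.tsum_le_tsum
    intro n
    apply ENNReal.ofReal_le_ofReal
    unfold zr
    apply one_div_le_one_div_of_le (by positivity)
    apply pow_le_pow_right₀ (by linarith) hs
  exact fun hcon => Ze2_ne_top (top_le_iff.mp (hcon ▸ h))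

lemma Hinner (m : ℕ) :
    HasSum (fun k : ℕ => 1 / ((k : ℝ) + 1) - 1 / ((k : ℝ) + (m : ℝ) + 2))
      (∑ i ∈ Finset.range (m + 1), 1 / ((i : ℝ) + 1)) := by
  set φ : ℕ → ℝ := fun k => ∑ i ∈ Finset.range (m + 1), 1 / ((k : ℝ) + (i : ℝ) + 1) with hφ
  have hstep : ∀ k, φ k - φ (k + 1) = 1 / ((k : ℝ) + 1) - 1 / ((k : ℝ) + (m : ℝ) + 2) := by
    intro k
    rw [hφ]
    simp only [← Finset.sum_sub_distrib]
    have : ∀ i ∈ Finset.range (m + 1),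
        1 / ((k : ℝ) + (i : ℝ) + 1) - 1 / (((k + 1 : ℕ) : ℝ) + (i : ℝ) + 1)
        = (fun i : ℕ => 1 / ((k : ℝ) + (i : ℝ) + 1)) i
          - (fun i : ℕ => 1 / ((k : ℝ) + (i : ℝ) + 1)) (i + 1) := by
      intro i _
      push_cast; ring_nf
    rw [Finset.sum_congr rfl this, Finset.sum_range_sub' (fun i : ℕ => 1 / ((k : ℝ) + (i : ℝ) + 1))]
    push_cast; ring_nf
  have hmono : ∀ k, φ (k + 1) ≤ φ k := by
    intro k
    have := hstep k
    have h1 : 1 / ((k : ℝ) + (m : ℝ) + 2) ≤ 1 / ((k : ℝ) + 1) :=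
      one_div_le_one_div_of_le (by positivity) (by push_cast; linarith [Nat.cast_nonneg (α := ℝ) m])
    linarith
  have hlim : Tendsto φ atTop (nhds 0) := by
    rw [hφ]
    have h0 : (0 : ℝ) = ∑ i ∈ Finset.range (m + 1), (0 : ℝ) := by simp
    rw [h0]
    exact tendsto_finset_sum _ fun i _ => tendsto_inv_shift i
  have h := telesum φ hmono hlim
  have hres : φ 0 = ∑ i ∈ Finset.range (m + 1), 1 / ((i : ℝ) + 1) := by
    rw [hφ]
    exact Finset.sum_congr rfl fun i _ => by push_cast; ring_nf
  have hfun : (fun k => φ k - φ (k + 1))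
      = fun k : ℕ => 1 / ((k : ℝ) + 1) - 1 / ((k : ℝ) + (m : ℝ) + 2) := funext hstep
  rw [hres, hfun] at h
  exact h

noncomputable def rr (m k : ℕ) : ℝ :=
  1 / (((m : ℝ) + (k : ℝ) + 2) * (((k : ℝ) + 1) * ((m : ℝ) + 1) ^ 7))

noncomputable def e8 (m k : ℕ) : ℝ :=
  (1 / ((m : ℝ) + (k : ℝ) + 2) ^ 8) * (1 / ((k : ℝ) + 1))

lemma e8_nonneg (m k : ℕ) : 0 ≤ e8 m k := by unfold e8; positivity

noncomputable def Rtot : ℝ≥0∞ := ∑' (m : ℕ) (k : ℕ), ENNReal.ofReal (rr m k)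
noncomputable def E8tot : ℝ≥0∞ := ∑' (m : ℕ) (k : ℕ), ENNReal.ofReal (e8 m k)

lemma rr_split (m k : ℕ) : rr m k =
    dr 2 7 m k + (dr 3 6 m k + (dr 4 5 m k + (dr 5 4 m k + (dr 6 3 m k +
      (dr 7 2 m k + (dr 8 1 m k + e8 m k)))))) := by
  unfold rr dr e8
  have h1 : ((m : ℝ) + (k : ℝ) + 2) ≠ 0 := by positivity
  have h2 : ((m : ℝ) + 1) ≠ 0 := by positivity
  have h3 : ((k : ℝ) + 1) ≠ 0 := by positivity
  have hw : ((k : ℝ) + 1)⁻¹ * (((m : ℝ) + 1)⁻¹ - ((m : ℝ) + (k : ℝ) + 2)⁻¹)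
      = ((m : ℝ) + (k : ℝ) + 2)⁻¹ * ((m : ℝ) + 1)⁻¹ := by
    field_simp
    ring
  simp only [one_div, mul_inv, ← inv_pow]
  generalize hU : ((m : ℝ) + (k : ℝ) + 2)⁻¹ = u at hw ⊢
  generalize hV : ((m : ℝ) + 1)⁻¹ = v at hw ⊢
  generalize hW : ((k : ℝ) + 1)⁻¹ = w at hw ⊢
  linear_combination (u *
    (v ^ 6 + v ^ 5 * u + v ^ 4 * u ^ 2 + v ^ 3 * u ^ 3 + v ^ 2 * u ^ 4 + v * u ^ 5 + u ^ 6)) * hw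

lemma claim1 : Rtot = Te 2 7 + (Te 3 6 + (Te 4 5 + (Te 5 4 + (Te 6 3 +
    (Te 7 2 + (Te 8 1 + E8tot)))))) := by
  rw [Rtot, Te, Te, Te, Te, Te, Te, Te, E8tot]
  rw [← ENNReal.tsum_add, ← ENNReal.tsum_add, ← ENNReal.tsum_add, ← ENNReal.tsum_add,
    ← ENNReal.tsum_add, ← ENNReal.tsum_add, ← ENNReal.tsum_add]
  apply tsum_congr; intro m
  rw [← ENNReal.tsum_add, ← ENNReal.tsum_add, ← ENNReal.tsum_add, ← ENNReal.tsum_add,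
    ← ENNReal.tsum_add, ← ENNReal.tsum_add, ← ENNReal.tsum_add]
  apply tsum_congr; intro k
  rw [rr_split m k]
  have n0 : (0:ℝ) ≤ dr 8 1 m k + e8 m k := add_nonneg (dr_nonneg _ _ _ _) (e8_nonneg _ _)
  have n1 : (0:ℝ) ≤ dr 7 2 m k + (dr 8 1 m k + e8 m k) := add_nonneg (dr_nonneg _ _ _ _) n0
  have n2 : (0:ℝ) ≤ dr 6 3 m k + (dr 7 2 m k + (dr 8 1 m k + e8 m k)) :=
    add_nonneg (dr_nonneg _ _ _ _) n1
  have n3 : (0:ℝ) ≤ dr 5 4 m k + (dr 6 3 m k + (dr 7 2 m k + (dr 8 1 m k + e8 m k))) :=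
    add_nonneg (dr_nonneg _ _ _ _) n2
  have n4 : (0:ℝ) ≤ dr 4 5 m k + (dr 5 4 m k + (dr 6 3 m k + (dr 7 2 m k + (dr 8 1 m k + e8 m k)))) :=
    add_nonneg (dr_nonneg _ _ _ _) n3
  have n5 : (0:ℝ) ≤ dr 3 6 m k + (dr 4 5 m k + (dr 5 4 m k + (dr 6 3 m k + (dr 7 2 m k + (dr 8 1 m k + e8 m k))))) :=
    add_nonneg (dr_nonneg _ _ _ _) n4
  rw [ENNReal.ofReal_add (dr_nonneg _ _ _ _) n5,
    ENNReal.ofReal_add (dr_nonneg _ _ _ _) n4,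
    ENNReal.ofReal_add (dr_nonneg _ _ _ _) n3,
    ENNReal.ofReal_add (dr_nonneg _ _ _ _) n2,
    ENNReal.ofReal_add (dr_nonneg _ _ _ _) n1,
    ENNReal.ofReal_add (dr_nonneg _ _ _ _) n0,
    ENNReal.ofReal_add (dr_nonneg _ _ _ _) (e8_nonneg _ _)]

lemma claim2 : E8tot = Te 8 1 := by
  rw [E8tot, ENNReal.tsum_comm, Te]
  apply tsum_congr; intro m
  apply tsum_congr; intro k
  congr 1
  unfold e8 dr
  ring

lemma claim3 : Rtot = Te 8 1 + Ze 9 := by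
  have hinner : ∀ m : ℕ, (∑' k : ℕ, ENNReal.ofReal (rr m k)) =
      ENNReal.ofReal ((1 / ((m : ℝ) + 1) ^ 8) * ∑ i ∈ Finset.range (m + 1), 1 / ((i : ℝ) + 1)) := by
    intro m
    have hs : HasSum (fun k : ℕ => rr m k)
        ((1 / ((m : ℝ) + 1) ^ 8) * ∑ i ∈ Finset.range (m + 1), 1 / ((i : ℝ) + 1)) := by
      have h := (Hinner m).mul_left (1 / ((m : ℝ) + 1) ^ 8)
      have hfun : (fun k : ℕ => (1 / ((m : ℝ) + 1) ^ 8)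
          * (1 / ((k : ℝ) + 1) - 1 / ((k : ℝ) + (m : ℝ) + 2))) = fun k : ℕ => rr m k := by
        funext k
        unfold rr
        have h1 : ((m : ℝ) + (k : ℝ) + 2) ≠ 0 := by positivity
        have h2 : ((m : ℝ) + 1) ≠ 0 := by positivity
        have h3 : ((k : ℝ) + 1) ≠ 0 := by positivity
        field_simp
        ring
      rwa [hfun] at h
    rw [← hs.tsum_eq]
    exact (ENNReal.ofReal_tsum_of_nonneg (fun k => by unfold rr; positivity) hs.summable).symm
  rw [Rtot]
  calc ∑' (m : ℕ) (k : ℕ), ENNReal.ofReal (rr m k)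
      = ∑' m : ℕ, ENNReal.ofReal ((1 / ((m : ℝ) + 1) ^ 8)
          * ∑ i ∈ Finset.range (m + 1), 1 / ((i : ℝ) + 1)) := tsum_congr hinner
    _ = (∑' m : ℕ, ENNReal.ofReal ((1 / ((m : ℝ) + 1) ^ 8)
          * ∑ i ∈ Finset.range m, 1 / ((i : ℝ) + 1))) + Ze 9 := by
        rw [Ze, ← ENNReal.tsum_add]
        apply tsum_congr; intro m
        rw [Finset.sum_range_succ, mul_add,
          ENNReal.ofReal_add (by positivity) (by positivity)]
        congr 1
        unfold zr
        congr 1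
        push_cast
        field_simp
    _ = Te 8 1 + Ze 9 := by
        congr 1
        have hpt : ∀ m : ℕ, ENNReal.ofReal ((1 / ((m : ℝ) + 1) ^ 8)
            * ∑ i ∈ Finset.range m, 1 / ((i : ℝ) + 1))
            = ∑ j ∈ Finset.range m, ENNReal.ofReal ((1 / ((m : ℝ) + 1) ^ 8) * (1 / ((j : ℝ) + 1))) := by
          intro m
          rw [Finset.mul_sum, ENNReal.ofReal_sum_of_nonneg (fun i _ => by positivity)]
        calc (∑' m : ℕ, ENNReal.ofReal ((1 / ((m : ℝ) + 1) ^ 8)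
              * ∑ i ∈ Finset.range m, 1 / ((i : ℝ) + 1)))
            = ∑' m : ℕ, ∑ j ∈ Finset.range m,
                ENNReal.ofReal ((1 / ((m : ℝ) + 1) ^ 8) * (1 / ((j : ℝ) + 1))) := tsum_congr hpt
          _ = Te 8 1 := by
              rw [tri' (fun i j => ENNReal.ofReal ((1 / ((i : ℝ) + 1) ^ 8) * (1 / ((j : ℝ) + 1))))]
              rw [Te]
              apply tsum_congr; intro m
              apply tsum_congr; intro k
              congr 1
              unfold dr
              push_cast
              ring

lemma sumform : Te 2 7 + (Te 3 6 + (Te 4 5 + (Te 5 4 + (Te 6 3 + (Te 7 2 + Te 8 1))))) = Ze 9 := by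
  have h := claim1
  rw [claim2, claim3] at h
  have h81 := Te_ne_top 8 1 (by norm_num) (by norm_num)
  rw [← ENNReal.add_right_inj h81]
  calc Te 8 1 + (Te 2 7 + (Te 3 6 + (Te 4 5 + (Te 5 4 + (Te 6 3 + (Te 7 2 + Te 8 1))))))
      = Te 2 7 + (Te 3 6 + (Te 4 5 + (Te 5 4 + (Te 6 3 + (Te 7 2 + (Te 8 1 + Te 8 1)))))) := by ring
    _ = Te 8 1 + Ze 9 := h.symm


lemma zetaV_eq (s : ℕ) : zetaV s = (Ze s).toReal := by
  rw [Ze, ENNReal.tsum_toReal_eq (fun _ => ENNReal.ofReal_ne_top), zetaV]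
  exact tsum_congr fun n => by rw [ENNReal.toReal_ofReal (zr_nonneg s n)]; rfl

noncomputable def E : ℕ × ℕ ≃ {q : ℕ × ℕ // q.2 < q.1 ∧ 1 ≤ q.2} where
  toFun mk := ⟨(mk.1 + mk.2 + 2, mk.1 + 1), by constructor <;> omega⟩
  invFun q := (q.1.2 - 1, q.1.1 - q.1.2 - 1)
  left_inv := by rintro ⟨m, k⟩; simp; omega
  right_inv := by
    rintro ⟨⟨n, mm⟩, h⟩
    obtain ⟨h1, h2⟩ := h
    simp only [] at h1 h2
    apply Subtype.ext
    simp only [Prod.mk.injEq]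
    omega

lemma dzeta_eq (a b : ℕ) : dzeta a b = (Te a b).toReal := by
  rw [dzeta, ← Equiv.tsum_eq E]
  have hpt : ∀ mk : ℕ × ℕ,
      1 / ((((E mk) : ℕ × ℕ).1 : ℝ) ^ a * (((E mk) : ℕ × ℕ).2 : ℝ) ^ b) = dr a b mk.1 mk.2 := by
    rintro ⟨m, k⟩
    show 1 / (((m + k + 2 : ℕ) : ℝ) ^ a * ((m + 1 : ℕ) : ℝ) ^ b) = dr a b m k
    unfold dr
    push_cast
    rw [div_mul_div_comm, one_mul]
  rw [tsum_congr hpt]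
  have hTe : Te a b = ∑' mk : ℕ × ℕ, ENNReal.ofReal (dr a b mk.1 mk.2) := by
    rw [Te, ENNReal.tsum_prod']
  rw [hTe, ENNReal.tsum_toReal_eq (fun _ => ENNReal.ofReal_ne_top)]
  exact tsum_congr fun mk => (ENNReal.toReal_ofReal (dr_nonneg a b mk.1 mk.2)).symm

lemma key : Te 8 1 + (Ze 2 * Ze 7 + (Ze 3 * Ze 6 + Ze 4 * Ze 5)) = 4 * Ze 9 := by
  rw [stuffle 2 7, stuffle 3 6, stuffle 4 5]
  have : Te 8 1 + (Te 2 7 + Te 7 2 + Ze (2 + 7) + (Te 3 6 + Te 6 3 + Ze (3 + 6)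
      + (Te 4 5 + Te 5 4 + Ze (4 + 5))))
      = (Te 2 7 + (Te 3 6 + (Te 4 5 + (Te 5 4 + (Te 6 3 + (Te 7 2 + Te 8 1)))))) + 3 * Ze 9 := by
    norm_num
    ring
  rw [this, sumform]
  ring

theorem final : dzeta 8 1 = 4 * zetaV 9 - zetaV 2 * zetaV 7 - zetaV 3 * zetaV 6 - zetaV 4 * zetaV 5 := by
  have hT81 := Te_ne_top 8 1 (by norm_num) (by norm_num)
  have hZ : ∀ s : ℕ, 2 ≤ s → Ze s ≠ ⊤ := Ze_ne_top
  have h27 : Ze 2 * Ze 7 ≠ ⊤ := ENNReal.mul_ne_top (hZ 2 le_rfl) (hZ 7 (by norm_num))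
  have h36 : Ze 3 * Ze 6 ≠ ⊤ := ENNReal.mul_ne_top (hZ 3 (by norm_num)) (hZ 6 (by norm_num))
  have h45 : Ze 4 * Ze 5 ≠ ⊤ := ENNReal.mul_ne_top (hZ 4 (by norm_num)) (hZ 5 (by norm_num))
  have h := congrArg ENNReal.toReal key
  rw [ENNReal.toReal_add hT81 (ENNReal.add_ne_top.2 ⟨h27, ENNReal.add_ne_top.2 ⟨h36, h45⟩⟩),
    ENNReal.toReal_add h27 (ENNReal.add_ne_top.2 ⟨h36, h45⟩),
    ENNReal.toReal_add h36 h45,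
    ENNReal.toReal_mul, ENNReal.toReal_mul, ENNReal.toReal_mul, ENNReal.toReal_mul] at h
  have h4 : (4 : ℝ≥0∞).toReal = 4 := by norm_num
  rw [h4] at h
  rw [dzeta_eq, zetaV_eq 9, zetaV_eq 2, zetaV_eq 7, zetaV_eq 3, zetaV_eq 6, zetaV_eq 4, zetaV_eq 5]
  linarith

end Stmt6Aux


theorem stmt6 : dzeta 8 1 = 4 * zetaV 9 - zetaV 2 * zetaV 7 - zetaV 3 * zetaV 6 - zetaV 4 * zetaV 5 := by
  exact Stmt6Aux.final
end

section
/- The double zeta value ζ(7,2) = ∑_{n>m≥1} 1/(n⁷ m²) equals −(37/2)ζ(9) + 7ζ(2)ζ(7) + 2ζ(3)ζ(6) + 4ζ(4)ζ(5). -/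
open scoped BigOperators

namespace Stmt10Aux

noncomputable def F (p q : ℕ) (v : ℕ × ℕ) : ℝ :=
  1 / (((v.1 : ℝ) + v.2 + 2) ^ p * ((v.1 : ℝ) + 1) ^ q)

noncomputable def D (p q : ℕ) : ℝ := ∑' v : ℕ × ℕ, F p q v

lemma zsummable {s : ℕ} (hs : 2 ≤ s) : Summable (fun n : ℕ => 1 / (n + 1 : ℝ) ^ s) := by
  have h := (Real.summable_one_div_nat_pow (p := s)).2 hs
  have h2 := (summable_nat_add_iff (f := fun n : ℕ => 1 / (n : ℝ) ^ s) 1).2 h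
  refine h2.congr fun n => ?_
  push_cast
  ring

lemma F_nonneg (p q : ℕ) (v : ℕ × ℕ) : 0 ≤ F p q v := by
  unfold F
  positivity

lemma F_le {p q : ℕ} (hp : 2 ≤ p) (hpq : p + q = 9) (v : ℕ × ℕ) :
    F p q v ≤ (1 / ((v.1 : ℝ) + 1) ^ 7) * (1 / ((v.2 : ℝ) + 1) ^ 2) := by
  have hx : (0:ℝ) < (v.1 : ℝ) + 1 := by positivity
  have hy : (0:ℝ) < (v.2 : ℝ) + 1 := by positivity
  have hs : (0:ℝ) < (v.1 : ℝ) + v.2 + 2 := by positivity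
  have hrw : (1 / ((v.1 : ℝ) + 1) ^ 7) * (1 / ((v.2 : ℝ) + 1) ^ 2)
      = 1 / (((v.1 : ℝ) + 1) ^ 7 * ((v.2 : ℝ) + 1) ^ 2) := by
    rw [div_mul_div_comm, one_mul]
  rw [F, hrw]
  apply one_div_le_one_div_of_le (by positivity)
  have h7 : ((v.1 : ℝ) + 1) ^ 7 = ((v.1 : ℝ) + 1) ^ q * ((v.1 : ℝ) + 1) ^ (p - 2) := by
    rw [← pow_add]; congr 1; omega
  rw [h7]
  have hxs : ((v.1 : ℝ) + 1) ^ (p - 2) ≤ ((v.1 : ℝ) + v.2 + 2) ^ (p - 2) :=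
    pow_le_pow_left₀ hx.le (by linarith [Nat.cast_nonneg (α := ℝ) v.2]) _
  have hys : ((v.2 : ℝ) + 1) ^ 2 ≤ ((v.1 : ℝ) + v.2 + 2) ^ 2 :=
    pow_le_pow_left₀ hy.le (by linarith [Nat.cast_nonneg (α := ℝ) v.1]) _
  calc ((v.1 : ℝ) + 1) ^ q * ((v.1 : ℝ) + 1) ^ (p-2) * ((v.2 : ℝ) + 1) ^ 2
      ≤ ((v.1 : ℝ) + 1) ^ q * (((v.1 : ℝ) + v.2 + 2) ^ (p-2) * ((v.1 : ℝ) + v.2 + 2) ^ 2) := by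
        rw [← mul_assoc]
        apply mul_le_mul _ hys (by positivity) (by positivity)
        exact mul_le_mul_of_nonneg_left hxs (by positivity)
    _ = ((v.1 : ℝ) + v.2 + 2) ^ p * ((v.1 : ℝ) + 1) ^ q := by
        rw [← pow_add]
        have : p - 2 + 2 = p := by omega
        rw [this, mul_comm]

set_option maxHeartbeats 800000 in
lemma F_summable {p q : ℕ} (hp : 2 ≤ p) (hpq : p + q = 9) : Summable (F p q) := by
  have h7 : Summable (fun n : ℕ => 1 / (n + 1 : ℝ) ^ 7) := zsummable (by norm_num)
  have h2 : Summable (fun n : ℕ => 1 / (n + 1 : ℝ) ^ 2) := zsummable (by norm_num)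
  have hprod : Summable (fun v : ℕ × ℕ =>
      (1 / ((v.1 : ℝ) + 1) ^ 7) * (1 / ((v.2 : ℝ) + 1) ^ 2)) := by
    refine Summable.mul_of_nonneg h7 h2 (Pi.le_def.mpr fun n => by positivity) (Pi.le_def.mpr fun n => by positivity)
  exact Summable.of_nonneg_of_le (F_nonneg p q) (F_le hp hpq) hprod

def eD : ℕ × ℕ ≃ {q : ℕ × ℕ // q.2 < q.1 ∧ 1 ≤ q.2} where
  toFun v := ⟨(v.1 + v.2 + 2, v.1 + 1), by omega⟩
  invFun w := ((w : ℕ × ℕ).2 - 1, (w : ℕ × ℕ).1 - (w : ℕ × ℕ).2 - 1)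
  left_inv v := by
    obtain ⟨x, y⟩ := v
    simp only [Prod.mk.injEq]
    omega
  right_inv w := by
    obtain ⟨⟨n, m⟩, h1, h2⟩ := w
    refine Subtype.ext (Prod.ext ?_ ?_) <;> simp <;> omega

lemma D_eq_dzeta (p q : ℕ) : D p q = dzeta p q := by
  rw [dzeta, ← eD.tsum_eq]
  apply tsum_congr
  intro v
  simp only [eD, Equiv.coe_fn_mk, F]
  push_cast
  ring_nf

lemma hasSum_F {p q : ℕ} (hp : 2 ≤ p) (hpq : p + q = 9) : HasSum (F p q) (D p q) :=
  (F_summable hp hpq).hasSum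

noncomputable def Fs (p q : ℕ) (v : ℕ × ℕ) : ℝ :=
  1 / (((v.1 : ℝ) + v.2 + 2) ^ p * ((v.2 : ℝ) + 1) ^ q)

lemma hasSum_Fs {p q : ℕ} (hp : 2 ≤ p) (hpq : p + q = 9) : HasSum (Fs p q) (D p q) := by
  have h := ((Equiv.prodComm ℕ ℕ).hasSum_iff (f := F p q)).2 (hasSum_F hp hpq)
  have he : Fs p q = F p q ∘ (Equiv.prodComm ℕ ℕ) := by
    funext v
    simp only [Function.comp_apply, Equiv.prodComm_apply, F, Fs, Prod.fst_swap, Prod.snd_swap]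
    ring_nf
  rw [he]
  exact h
lemma hasSum_zeta {s : ℕ} (hs : 2 ≤ s) : HasSum (fun n : ℕ => 1 / (n + 1 : ℝ) ^ s) (zetaV s) :=
  (zsummable hs).hasSum

noncomputable def G (a b : ℕ) (v : ℕ × ℕ) : ℝ :=
  (1 / ((v.1 : ℝ) + 1) ^ a) * (1 / ((v.2 : ℝ) + 1) ^ b)

set_option maxHeartbeats 1000000 in
lemma G_summable {a b : ℕ} (ha : 2 ≤ a) (hb : 2 ≤ b) : Summable (G a b) :=
  Summable.mul_of_nonneg (zsummable ha) (zsummable hb)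
    (Pi.le_def.mpr fun n => by positivity) (Pi.le_def.mpr fun n => by positivity)

lemma hasSum_G {a b : ℕ} (ha : 2 ≤ a) (hb : 2 ≤ b) :
    HasSum (G a b) (zetaV a * zetaV b) := by
  have hS := G_summable ha hb
  have ht : ∑' v : ℕ × ℕ, G a b v = zetaV a * zetaV b := by
    rw [Summable.tsum_prod hS]
    have hinner : ∀ x : ℕ, ∑' y : ℕ, G a b (x, y) = (1 / ((x : ℝ) + 1) ^ a) * zetaV b := by
      intro x
      rw [zetaV, ← tsum_mul_left]
      exact tsum_congr fun y => rfl
    calc ∑' (x : ℕ) (y : ℕ), G a b (x, y)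
        = ∑' x : ℕ, (1 / ((x : ℝ) + 1) ^ a) * zetaV b := tsum_congr hinner
      _ = zetaV a * zetaV b := by
          rw [tsum_mul_right]
          rfl
  exact ht ▸ hS.hasSum

def sGT : Set (ℕ × ℕ) := {v | v.2 < v.1}
def sLT : Set (ℕ × ℕ) := {v | v.1 < v.2}
def sEQ : Set (ℕ × ℕ) := {v | v.1 = v.2}

def eGT : ℕ × ℕ ≃ sGT where
  toFun v := ⟨(v.1 + v.2 + 1, v.1), by simp only [sGT, Set.mem_setOf_eq]; omega⟩
  invFun w := ((w : ℕ × ℕ).2, (w : ℕ × ℕ).1 - (w : ℕ × ℕ).2 - 1)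
  left_inv v := by
    obtain ⟨x, y⟩ := v
    refine Prod.ext ?_ ?_ <;> simp <;> omega
  right_inv w := by
    obtain ⟨⟨n, m⟩, h⟩ := w
    simp only [sGT, Set.mem_setOf_eq] at h
    refine Subtype.ext (Prod.ext ?_ ?_) <;> simp <;> omega

def eLT : ℕ × ℕ ≃ sLT where
  toFun v := ⟨(v.1, v.1 + v.2 + 1), by simp only [sLT, Set.mem_setOf_eq]; omega⟩
  invFun w := ((w : ℕ × ℕ).1, (w : ℕ × ℕ).2 - (w : ℕ × ℕ).1 - 1)
  left_inv v := by
    obtain ⟨x, y⟩ := v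
    refine Prod.ext ?_ ?_ <;> simp <;> omega
  right_inv w := by
    obtain ⟨⟨n, m⟩, h⟩ := w
    simp only [sLT, Set.mem_setOf_eq] at h
    refine Subtype.ext (Prod.ext ?_ ?_) <;> simp <;> omega

def eEQ : ℕ ≃ sEQ where
  toFun n := ⟨(n, n), rfl⟩
  invFun w := (w : ℕ × ℕ).1
  left_inv n := rfl
  right_inv w := by
    obtain ⟨⟨n, m⟩, h⟩ := w
    simp only [sEQ, Set.mem_setOf_eq] at h
    exact Subtype.ext (Prod.ext rfl h)

lemma hasSum_GT {a b : ℕ} (ha : 2 ≤ a) (hab : a + b = 9) :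
    HasSum ((G a b) ∘ ((↑) : sGT → ℕ × ℕ)) (D a b) := by
  refine eGT.hasSum_iff.mp ?_
  have he : ((G a b) ∘ ((↑) : sGT → ℕ × ℕ)) ∘ eGT = F a b := by
    funext v
    simp only [Function.comp_apply, eGT, Equiv.coe_fn_mk, G, F]
    push_cast
    ring_nf
  rw [he]
  exact hasSum_F ha hab

lemma hasSum_LT {a b : ℕ} (hb : 2 ≤ b) (hab : a + b = 9) :
    HasSum ((G a b) ∘ ((↑) : sLT → ℕ × ℕ)) (D b a) := by
  refine eLT.hasSum_iff.mp ?_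
  have he : ((G a b) ∘ ((↑) : sLT → ℕ × ℕ)) ∘ eLT = F b a := by
    funext v
    simp only [Function.comp_apply, eLT, Equiv.coe_fn_mk, G, F]
    push_cast
    ring_nf
  rw [he]
  exact hasSum_F hb (by omega)

lemma hasSum_EQ {a b : ℕ} (ha : 2 ≤ a) :
    HasSum ((G a b) ∘ ((↑) : sEQ → ℕ × ℕ)) (zetaV (a + b)) := by
  refine eEQ.hasSum_iff.mp ?_
  have he : ((G a b) ∘ ((↑) : sEQ → ℕ × ℕ)) ∘ eEQ
      = fun n : ℕ => 1 / ((n : ℝ) + 1) ^ (a + b) := by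
    funext n
    simp only [Function.comp_apply, eEQ, Equiv.coe_fn_mk, G]
    rw [div_mul_div_comm, one_mul, ← pow_add]
  rw [he]
  exact hasSum_zeta (by omega)

lemma stuffle {a b : ℕ} (ha : 2 ≤ a) (hb : 2 ≤ b) (hab : a + b = 9) :
    zetaV a * zetaV b = D a b + D b a + zetaV 9 := by
  have hdisj : Disjoint sGT sLT := by
    rw [Set.disjoint_left]
    intro v h1 h2
    simp only [sGT, Set.mem_setOf_eq] at h1
    simp only [sLT, Set.mem_setOf_eq] at h2
    omega
  have h12 := (hasSum_GT ha hab).add_disjoint hdisj (hasSum_LT hb hab)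
  have hcompl : IsCompl (sGT ∪ sLT) sEQ := by
    have : sEQ = (sGT ∪ sLT)ᶜ := by
      ext v
      simp only [sEQ, sGT, sLT, Set.mem_setOf_eq, Set.mem_compl_iff, Set.mem_union, not_or]
      omega
    rw [this]
    exact isCompl_compl
  have h := h12.add_isCompl hcompl (hasSum_EQ ha (b := b))
  have h9 : a + b = 9 := hab
  rw [h9] at h
  exact (hasSum_G ha hb).unique h
lemma pf27 (u w : ℝ) (hu : 0 < u) (hw : 0 < w) :
    1 / (u ^ 2 * w ^ 7) = 1 / ((u + w) ^ 7 * u ^ 2) + 7 * (1 / ((u + w) ^ 8 * u ^ 1)) + 1 / ((u + w) ^ 2 * w ^ 7) + 2 * (1 / ((u + w) ^ 3 * w ^ 6)) + 3 * (1 / ((u + w) ^ 4 * w ^ 5)) + 4 * (1 / ((u + w) ^ 5 * w ^ 4)) + 5 * (1 / ((u + w) ^ 6 * w ^ 3)) + 6 * (1 / ((u + w) ^ 7 * w ^ 2)) + 7 * (1 / ((u + w) ^ 8 * w ^ 1)) := by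
  have hs : 0 < u + w := by positivity
  field_simp
  ring

lemma E27 : zetaV 2 * zetaV 7 = D 7 2 + 7 * D 8 1 + D 2 7 + 2 * D 3 6 + 3 * D 4 5 + 4 * D 5 4 + 5 * D 6 3 + 6 * D 7 2 + 7 * D 8 1 := by
  have h : HasSum (fun v : ℕ × ℕ => F 7 2 v + 7 * F 8 1 v + Fs 2 7 v + 2 * Fs 3 6 v + 3 * Fs 4 5 v + 4 * Fs 5 4 v + 5 * Fs 6 3 v + 6 * Fs 7 2 v + 7 * Fs 8 1 v) (D 7 2 + 7 * D 8 1 + D 2 7 + 2 * D 3 6 + 3 * D 4 5 + 4 * D 5 4 + 5 * D 6 3 + 6 * D 7 2 + 7 * D 8 1) :=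
    (((((((((hasSum_F (by norm_num) (by norm_num)).add ((hasSum_F (by norm_num) (by norm_num)).mul_left 7)).add (hasSum_Fs (by norm_num) (by norm_num))).add ((hasSum_Fs (by norm_num) (by norm_num)).mul_left 2)).add ((hasSum_Fs (by norm_num) (by norm_num)).mul_left 3)).add ((hasSum_Fs (by norm_num) (by norm_num)).mul_left 4)).add ((hasSum_Fs (by norm_num) (by norm_num)).mul_left 5)).add ((hasSum_Fs (by norm_num) (by norm_num)).mul_left 6)).add ((hasSum_Fs (by norm_num) (by norm_num)).mul_left 7))
  have hpt : G 2 7 = fun v : ℕ × ℕ => F 7 2 v + 7 * F 8 1 v + Fs 2 7 v + 2 * Fs 3 6 v + 3 * Fs 4 5 v + 4 * Fs 5 4 v + 5 * Fs 6 3 v + 6 * Fs 7 2 v + 7 * Fs 8 1 v := by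
    funext v
    have hid := pf27 ((v.1 : ℝ) + 1) ((v.2 : ℝ) + 1) (by positivity) (by positivity)
    have hsw : ((v.1 : ℝ) + 1) + ((v.2 : ℝ) + 1) = (v.1 : ℝ) + v.2 + 2 := by ring
    rw [hsw] at hid
    simp only [G, F, Fs]
    rw [div_mul_div_comm, one_mul]
    exact hid
  exact (hasSum_G (by norm_num) (by norm_num)).unique (hpt ▸ h)

lemma pf36 (u w : ℝ) (hu : 0 < u) (hw : 0 < w) :
    1 / (u ^ 3 * w ^ 6) = 1 / ((u + w) ^ 6 * u ^ 3) + 6 * (1 / ((u + w) ^ 7 * u ^ 2)) + 21 * (1 / ((u + w) ^ 8 * u ^ 1)) + 1 / ((u + w) ^ 3 * w ^ 6) + 3 * (1 / ((u + w) ^ 4 * w ^ 5)) + 6 * (1 / ((u + w) ^ 5 * w ^ 4)) + 10 * (1 / ((u + w) ^ 6 * w ^ 3)) + 15 * (1 / ((u + w) ^ 7 * w ^ 2)) + 21 * (1 / ((u + w) ^ 8 * w ^ 1)) := by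
  have hs : 0 < u + w := by positivity
  field_simp
  ring

lemma E36 : zetaV 3 * zetaV 6 = D 6 3 + 6 * D 7 2 + 21 * D 8 1 + D 3 6 + 3 * D 4 5 + 6 * D 5 4 + 10 * D 6 3 + 15 * D 7 2 + 21 * D 8 1 := by
  have h : HasSum (fun v : ℕ × ℕ => F 6 3 v + 6 * F 7 2 v + 21 * F 8 1 v + Fs 3 6 v + 3 * Fs 4 5 v + 6 * Fs 5 4 v + 10 * Fs 6 3 v + 15 * Fs 7 2 v + 21 * Fs 8 1 v) (D 6 3 + 6 * D 7 2 + 21 * D 8 1 + D 3 6 + 3 * D 4 5 + 6 * D 5 4 + 10 * D 6 3 + 15 * D 7 2 + 21 * D 8 1) :=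
    (((((((((hasSum_F (by norm_num) (by norm_num)).add ((hasSum_F (by norm_num) (by norm_num)).mul_left 6)).add ((hasSum_F (by norm_num) (by norm_num)).mul_left 21)).add (hasSum_Fs (by norm_num) (by norm_num))).add ((hasSum_Fs (by norm_num) (by norm_num)).mul_left 3)).add ((hasSum_Fs (by norm_num) (by norm_num)).mul_left 6)).add ((hasSum_Fs (by norm_num) (by norm_num)).mul_left 10)).add ((hasSum_Fs (by norm_num) (by norm_num)).mul_left 15)).add ((hasSum_Fs (by norm_num) (by norm_num)).mul_left 21))
  have hpt : G 3 6 = fun v : ℕ × ℕ => F 6 3 v + 6 * F 7 2 v + 21 * F 8 1 v + Fs 3 6 v + 3 * Fs 4 5 v + 6 * Fs 5 4 v + 10 * Fs 6 3 v + 15 * Fs 7 2 v + 21 * Fs 8 1 v := by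
    funext v
    have hid := pf36 ((v.1 : ℝ) + 1) ((v.2 : ℝ) + 1) (by positivity) (by positivity)
    have hsw : ((v.1 : ℝ) + 1) + ((v.2 : ℝ) + 1) = (v.1 : ℝ) + v.2 + 2 := by ring
    rw [hsw] at hid
    simp only [G, F, Fs]
    rw [div_mul_div_comm, one_mul]
    exact hid
  exact (hasSum_G (by norm_num) (by norm_num)).unique (hpt ▸ h)

lemma pf45 (u w : ℝ) (hu : 0 < u) (hw : 0 < w) :
    1 / (u ^ 4 * w ^ 5) = 1 / ((u + w) ^ 5 * u ^ 4) + 5 * (1 / ((u + w) ^ 6 * u ^ 3)) + 15 * (1 / ((u + w) ^ 7 * u ^ 2)) + 35 * (1 / ((u + w) ^ 8 * u ^ 1)) + 1 / ((u + w) ^ 4 * w ^ 5) + 4 * (1 / ((u + w) ^ 5 * w ^ 4)) + 10 * (1 / ((u + w) ^ 6 * w ^ 3)) + 20 * (1 / ((u + w) ^ 7 * w ^ 2)) + 35 * (1 / ((u + w) ^ 8 * w ^ 1)) := by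
  have hs : 0 < u + w := by positivity
  field_simp
  ring

lemma E45 : zetaV 4 * zetaV 5 = D 5 4 + 5 * D 6 3 + 15 * D 7 2 + 35 * D 8 1 + D 4 5 + 4 * D 5 4 + 10 * D 6 3 + 20 * D 7 2 + 35 * D 8 1 := by
  have h : HasSum (fun v : ℕ × ℕ => F 5 4 v + 5 * F 6 3 v + 15 * F 7 2 v + 35 * F 8 1 v + Fs 4 5 v + 4 * Fs 5 4 v + 10 * Fs 6 3 v + 20 * Fs 7 2 v + 35 * Fs 8 1 v) (D 5 4 + 5 * D 6 3 + 15 * D 7 2 + 35 * D 8 1 + D 4 5 + 4 * D 5 4 + 10 * D 6 3 + 20 * D 7 2 + 35 * D 8 1) :=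
    (((((((((hasSum_F (by norm_num) (by norm_num)).add ((hasSum_F (by norm_num) (by norm_num)).mul_left 5)).add ((hasSum_F (by norm_num) (by norm_num)).mul_left 15)).add ((hasSum_F (by norm_num) (by norm_num)).mul_left 35)).add (hasSum_Fs (by norm_num) (by norm_num))).add ((hasSum_Fs (by norm_num) (by norm_num)).mul_left 4)).add ((hasSum_Fs (by norm_num) (by norm_num)).mul_left 10)).add ((hasSum_Fs (by norm_num) (by norm_num)).mul_left 20)).add ((hasSum_Fs (by norm_num) (by norm_num)).mul_left 35))
  have hpt : G 4 5 = fun v : ℕ × ℕ => F 5 4 v + 5 * F 6 3 v + 15 * F 7 2 v + 35 * F 8 1 v + Fs 4 5 v + 4 * Fs 5 4 v + 10 * Fs 6 3 v + 20 * Fs 7 2 v + 35 * Fs 8 1 v := by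
    funext v
    have hid := pf45 ((v.1 : ℝ) + 1) ((v.2 : ℝ) + 1) (by positivity) (by positivity)
    have hsw : ((v.1 : ℝ) + 1) + ((v.2 : ℝ) + 1) = (v.1 : ℝ) + v.2 + 2 := by ring
    rw [hsw] at hid
    simp only [G, F, Fs]
    rw [div_mul_div_comm, one_mul]
    exact hid
  exact (hasSum_G (by norm_num) (by norm_num)).unique (hpt ▸ h)

lemma harmonic1_succ (n : ℕ) : harmonic1 (n + 1) = harmonic1 n + 1 / ((n : ℝ) + 1) :=
  Finset.sum_range_succ _ n

lemma harmonic1_nonneg (n : ℕ) : 0 ≤ harmonic1 n :=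
  Finset.sum_nonneg fun m _ => by positivity

lemma harm_bound (K m : ℕ) :
    harmonic1 (K + m) ≤ harmonic1 K + m * (1 / ((K : ℝ) + 1)) := by
  induction m with
  | zero => simp
  | succ m ih =>
    have h1 : harmonic1 (K + (m + 1)) = harmonic1 (K + m) + 1 / (((K + m : ℕ) : ℝ) + 1) := by
      rw [show K + (m + 1) = (K + m) + 1 by ring]
      exact harmonic1_succ (K + m)
    have h2 : (1 : ℝ) / (((K + m : ℕ) : ℝ) + 1) ≤ 1 / ((K : ℝ) + 1) := by
      apply one_div_le_one_div_of_le (by positivity)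
      push_cast
      linarith [Nat.cast_nonneg (α := ℝ) m]
    rw [h1]
    push_cast at h2 ih ⊢
    linarith

lemma sum_shift (m : ℕ) (K : ℕ) :
    ∑ X ∈ Finset.range K, (1 / ((X : ℝ) + 1 + m)) = harmonic1 (K + m) - harmonic1 m := by
  induction K with
  | zero => simp
  | succ K ih =>
    rw [Finset.sum_range_succ, ih]
    have h1 : harmonic1 (K + 1 + m) = harmonic1 (K + m) + 1 / (((K + m : ℕ) : ℝ) + 1) := by
      rw [show K + 1 + m = (K + m) + 1 by ring]
      exact harmonic1_succ (K + m)
    rw [h1]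
    push_cast
    ring

lemma telescope (m : ℕ) :
    HasSum (fun X : ℕ => 1 / ((X : ℝ) + 1) - 1 / ((X : ℝ) + 1 + m)) (harmonic1 m) := by
  have hnn : ∀ X : ℕ, 0 ≤ 1 / ((X : ℝ) + 1) - 1 / ((X : ℝ) + 1 + m) := by
    intro X
    have : 1 / ((X : ℝ) + 1 + m) ≤ 1 / ((X : ℝ) + 1) := by
      apply one_div_le_one_div_of_le (by positivity)
      linarith [Nat.cast_nonneg (α := ℝ) m]
    linarith
  rw [hasSum_iff_tendsto_nat_of_nonneg hnn]
  have hpart : ∀ K : ℕ, ∑ X ∈ Finset.range K, (1 / ((X : ℝ) + 1) - 1 / ((X : ℝ) + 1 + m))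
      = harmonic1 m + (harmonic1 K - harmonic1 (K + m)) := by
    intro K
    rw [Finset.sum_sub_distrib, sum_shift m K]
    have : ∑ X ∈ Finset.range K, (1 / ((X : ℝ) + 1)) = harmonic1 K := rfl
    rw [this]
    ring
  apply Filter.Tendsto.congr (fun K => (hpart K).symm)
  have h0 : Filter.Tendsto (fun K : ℕ => harmonic1 K - harmonic1 (K + m)) Filter.atTop (nhds 0) := by
    have hneg : Filter.Tendsto (fun K : ℕ => harmonic1 (K + m) - harmonic1 K) Filter.atTop (nhds 0) := by
      apply squeeze_zero (fun K => ?_) (fun K => ?_)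
        (g := fun K : ℕ => (m : ℝ) * (1 / ((K : ℝ) + 1)))
      · have h := tendsto_one_div_add_atTop_nhds_zero_nat.const_mul (m : ℝ)
        simpa using h
      · have : harmonic1 K ≤ harmonic1 (K + m) := by
          have : ∀ j, harmonic1 K ≤ harmonic1 (K + j) := by
            intro j
            induction j with
            | zero => simp
            | succ j ih =>
              rw [show K + (j+1) = (K+j)+1 by ring, harmonic1_succ]
              have : 0 < (((K + j : ℕ) : ℝ) + 1) := by positivity
              have h2 : 0 ≤ 1 / (((K + j : ℕ) : ℝ) + 1) := by positivity
              linarith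
          exact this m
        linarith
      · linarith [harm_bound K m]
    have := hneg.neg
    simpa using this
  have := (tendsto_const_nhds (x := harmonic1 m) (f := Filter.atTop (α := ℕ))).add h0
  simpa using this

lemma D81_eq : D 8 1 = ∑' n : ℕ, (1 / ((n : ℝ) + 2) ^ 8) * harmonic1 (n + 1) := by
  have hsum : Summable (F 8 1) := F_summable (by norm_num) (by norm_num)
  have he := (Finset.HasAntidiagonal.sigmaAntidiagonalEquivProd (A := ℕ)).tsum_eq (F 8 1)
  rw [D, ← he]
  have hs2 : Summable (fun c : (n : ℕ) × { x // x ∈ Finset.HasAntidiagonal.antidiagonal n } =>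
      F 8 1 ((Finset.HasAntidiagonal.sigmaAntidiagonalEquivProd (A := ℕ)) c)) :=
    (Finset.HasAntidiagonal.sigmaAntidiagonalEquivProd (A := ℕ)).summable_iff.2 hsum
  rw [Summable.tsum_sigma hs2]
  apply tsum_congr
  intro n
  rw [tsum_fintype]
  have h1 : ∑ c : {x // x ∈ Finset.HasAntidiagonal.antidiagonal n},
      F 8 1 ((Finset.HasAntidiagonal.sigmaAntidiagonalEquivProd (A := ℕ)) ⟨n, c⟩)
      = ∑ p ∈ Finset.HasAntidiagonal.antidiagonal n, F 8 1 p := by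
    rw [← Finset.sum_coe_sort (Finset.HasAntidiagonal.antidiagonal n) (F 8 1)]
    exact Finset.sum_congr rfl fun c _ => rfl
  rw [h1, Finset.Nat.sum_antidiagonal_eq_sum_range_succ_mk]
  have h2 : ∀ k ∈ Finset.range (n + 1),
      F 8 1 (k, n - k) = (1 / ((n : ℝ) + 2) ^ 8) * (1 / ((k : ℝ) + 1)) := by
    intro k hk
    have hkn : k ≤ n := by
      simp only [Finset.mem_range] at hk
      omega
    have hc : ((n - k : ℕ) : ℝ) = (n : ℝ) - k := by
      rw [Nat.cast_sub hkn]
    simp only [F]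
    rw [hc]
    have h3 : ((k : ℝ) + ((n : ℝ) - k) + 2) = (n : ℝ) + 2 := by ring
    rw [h3, pow_one, div_mul_div_comm, one_mul]
  rw [Finset.sum_congr rfl h2, ← Finset.mul_sum]
  rfl

lemma harmonic1_le (n : ℕ) : harmonic1 n ≤ n := by
  induction n with
  | zero => simp [harmonic1]
  | succ n ih =>
    rw [harmonic1_succ]
    have h1 : 1 / ((n : ℝ) + 1) ≤ 1 := by
      rw [div_le_one (by positivity)]
      linarith [Nat.cast_nonneg (α := ℝ) n]
    push_cast
    linarith

lemma sumH : Summable (fun Y : ℕ => (1 / ((Y : ℝ) + 1) ^ 8) * harmonic1 Y) := by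
  have h7 : Summable (fun Y : ℕ => 1 / ((Y : ℝ) + 1) ^ 7) := zsummable (by norm_num)
  apply Summable.of_nonneg_of_le (fun Y => mul_nonneg (by positivity) (harmonic1_nonneg Y)) _ h7
  intro Y
  have h1 : harmonic1 Y ≤ (Y : ℝ) + 1 := by
    have := harmonic1_le Y
    linarith [Nat.cast_nonneg (α := ℝ) Y]
  calc (1 / ((Y : ℝ) + 1) ^ 8) * harmonic1 Y
      ≤ (1 / ((Y : ℝ) + 1) ^ 8) * ((Y : ℝ) + 1) := by
        apply mul_le_mul_of_nonneg_left h1 (by positivity)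
    _ = 1 / ((Y : ℝ) + 1) ^ 7 := by
        rw [one_div, one_div, pow_succ, mul_inv]
        field_simp
  
lemma hasSum_H1 : HasSum (fun Y : ℕ => (1 / ((Y : ℝ) + 1) ^ 8) * harmonic1 Y) (D 8 1) := by
  have hs := sumH
  have ht := Summable.tsum_eq_zero_add hs
  have heq : ∑' Y : ℕ, (1 / ((Y : ℝ) + 1) ^ 8) * harmonic1 Y = D 8 1 := by
    rw [ht, D81_eq]
    have h0 : (1 / (((0 : ℕ) : ℝ) + 1) ^ 8) * harmonic1 0 = 0 := by simp [harmonic1]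
    rw [h0, zero_add]
    apply tsum_congr
    intro n
    push_cast
    ring_nf
  exact heq ▸ hs.hasSum

lemma hasSum_H2 :
    HasSum (fun Y : ℕ => (1 / ((Y : ℝ) + 1) ^ 8) * harmonic1 (Y + 1)) (D 8 1 + zetaV 9) := by
  have h := hasSum_H1.add (hasSum_zeta (s := 9) (by norm_num))
  have hpt : (fun Y : ℕ => (1 / ((Y : ℝ) + 1) ^ 8) * harmonic1 (Y + 1))
      = fun Y : ℕ => (1 / ((Y : ℝ) + 1) ^ 8) * harmonic1 Y + 1 / ((Y : ℝ) + 1) ^ 9 := by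
    funext Y
    rw [harmonic1_succ, mul_add]
    congr 1
    rw [div_mul_div_comm, one_mul, ← pow_succ]
  rw [hpt]
  exact h

noncomputable def Hterm (v : ℕ × ℕ) : ℝ :=
  (1 / ((v.1 : ℝ) + 1) ^ 8) * (1 / ((v.2 : ℝ) + 1) - 1 / ((v.1 : ℝ) + v.2 + 2))

lemma Hterm_eq (v : ℕ × ℕ) :
    Hterm v = 1 / (((v.1 : ℝ) + 1) ^ 7 * (((v.2 : ℝ) + 1) * ((v.1 : ℝ) + v.2 + 2))) := by
  have h1 : (0:ℝ) < (v.1 : ℝ) + 1 := by positivity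
  have h2 : (0:ℝ) < (v.2 : ℝ) + 1 := by positivity
  have h3 : (0:ℝ) < (v.1 : ℝ) + v.2 + 2 := by positivity
  rw [Hterm]
  field_simp
  ring

lemma Hterm_nonneg (v : ℕ × ℕ) : 0 ≤ Hterm v := by
  rw [Hterm_eq]
  positivity

set_option maxHeartbeats 1000000 in
lemma Hterm_summable : Summable Hterm := by
  have h7 : Summable (fun n : ℕ => 1 / (n + 1 : ℝ) ^ 7) := zsummable (by norm_num)
  have h2 : Summable (fun n : ℕ => 1 / (n + 1 : ℝ) ^ 2) := zsummable (by norm_num)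
  have hprod : Summable (fun v : ℕ × ℕ =>
      (1 / ((v.1 : ℝ) + 1) ^ 7) * (1 / ((v.2 : ℝ) + 1) ^ 2)) :=
    Summable.mul_of_nonneg h7 h2 (Pi.le_def.mpr fun n => by positivity)
      (Pi.le_def.mpr fun n => by positivity)
  apply Summable.of_nonneg_of_le Hterm_nonneg _ hprod
  intro v
  rw [Hterm_eq]
  have hrw : (1 / ((v.1 : ℝ) + 1) ^ 7) * (1 / ((v.2 : ℝ) + 1) ^ 2)
      = 1 / (((v.1 : ℝ) + 1) ^ 7 * ((v.2 : ℝ) + 1) ^ 2) := by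
    rw [div_mul_div_comm, one_mul]
  rw [hrw]
  apply one_div_le_one_div_of_le (by positivity)
  have hb : ((v.2 : ℝ) + 1) * ((v.2 : ℝ) + 1) ≤ ((v.2 : ℝ) + 1) * ((v.1 : ℝ) + v.2 + 2) := by
    apply mul_le_mul_of_nonneg_left _ (by positivity)
    linarith [Nat.cast_nonneg (α := ℝ) v.1]
  calc ((v.1 : ℝ) + 1) ^ 7 * ((v.2 : ℝ) + 1) ^ 2
      = ((v.1 : ℝ) + 1) ^ 7 * (((v.2 : ℝ) + 1) * ((v.2 : ℝ) + 1)) := by ring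
    _ ≤ ((v.1 : ℝ) + 1) ^ 7 * (((v.2 : ℝ) + 1) * ((v.1 : ℝ) + v.2 + 2)) :=
        mul_le_mul_of_nonneg_left hb (by positivity)

lemma hasSum_Hterm : HasSum Hterm (D 8 1 + zetaV 9) := by
  have hsummable := Hterm_summable
  have hinner : ∀ Y : ℕ, ∑' X : ℕ, Hterm (Y, X)
      = (1 / ((Y : ℝ) + 1) ^ 8) * harmonic1 (Y + 1) := by
    intro Y
    have htel := (telescope (Y + 1)).mul_left (1 / ((Y : ℝ) + 1) ^ 8)
    have hfun : (fun X : ℕ => (1 / ((Y : ℝ) + 1) ^ 8) *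
        (1 / ((X : ℝ) + 1) - 1 / ((X : ℝ) + 1 + ((Y + 1 : ℕ) : ℝ))))
        = fun X : ℕ => Hterm (Y, X) := by
      funext X
      simp only [Hterm]
      push_cast
      ring_nf
    rw [hfun] at htel
    exact htel.tsum_eq
  have ht : ∑' v : ℕ × ℕ, Hterm v = D 8 1 + zetaV 9 := by
    rw [Summable.tsum_prod hsummable]
    rw [tsum_congr hinner]
    exact hasSum_H2.tsum_eq
  exact ht ▸ hsummable.hasSum

lemma pfSF (u w : ℝ) (hu : 0 < u) (hw : 0 < w) :
    1 / w ^ 8 * (1 / u - 1 / (u + w)) = 1 / ((u + w) ^ 8 * u) + 1 / ((u + w) ^ 2 * w ^ 7)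
      + 1 / ((u + w) ^ 3 * w ^ 6) + 1 / ((u + w) ^ 4 * w ^ 5) + 1 / ((u + w) ^ 5 * w ^ 4)
      + 1 / ((u + w) ^ 6 * w ^ 3) + 1 / ((u + w) ^ 7 * w ^ 2) + 1 / ((u + w) ^ 8 * w) := by
  have hs : 0 < u + w := by positivity
  field_simp
  ring

lemma SF : D 8 1 + zetaV 9 = D 8 1 + D 2 7 + D 3 6 + D 4 5 + D 5 4 + D 6 3 + D 7 2 + D 8 1 := by
  have h : HasSum (fun v : ℕ × ℕ => Fs 8 1 v + F 2 7 v + F 3 6 v + F 4 5 v + F 5 4 v + F 6 3 v + F 7 2 v + F 8 1 v) (D 8 1 + D 2 7 + D 3 6 + D 4 5 + D 5 4 + D 6 3 + D 7 2 + D 8 1) :=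
    ((((((((hasSum_Fs (by norm_num) (by norm_num)).add (hasSum_F (by norm_num) (by norm_num))).add (hasSum_F (by norm_num) (by norm_num))).add (hasSum_F (by norm_num) (by norm_num))).add (hasSum_F (by norm_num) (by norm_num))).add (hasSum_F (by norm_num) (by norm_num))).add (hasSum_F (by norm_num) (by norm_num))).add (hasSum_F (by norm_num) (by norm_num)))
  have hpt : Hterm = fun v : ℕ × ℕ => Fs 8 1 v + F 2 7 v + F 3 6 v + F 4 5 v + F 5 4 v + F 6 3 v + F 7 2 v + F 8 1 v := by
    funext v
    have hid := pfSF ((v.2 : ℝ) + 1) ((v.1 : ℝ) + 1) (by positivity) (by positivity)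
    have hsw : ((v.2 : ℝ) + 1) + ((v.1 : ℝ) + 1) = (v.1 : ℝ) + v.2 + 2 := by ring
    rw [hsw] at hid
    simp only [Hterm, F, Fs, pow_one]
    exact hid
  exact (hasSum_Hterm).unique (hpt ▸ h)

end Stmt10Aux

theorem stmt10 : dzeta 7 2 = -(37/2) * zetaV 9 + 7 * zetaV 2 * zetaV 7 + 2 * zetaV 3 * zetaV 6 + 4 * zetaV 4 * zetaV 5 := by
  have hD : dzeta 7 2 = Stmt10Aux.D 7 2 := (Stmt10Aux.D_eq_dzeta 7 2).symm
  have s27 := Stmt10Aux.stuffle (a := 2) (b := 7) (by norm_num) (by norm_num) (by norm_num)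
  have s36 := Stmt10Aux.stuffle (a := 3) (b := 6) (by norm_num) (by norm_num) (by norm_num)
  have s45 := Stmt10Aux.stuffle (a := 4) (b := 5) (by norm_num) (by norm_num) (by norm_num)
  have e27 := Stmt10Aux.E27
  have e36 := Stmt10Aux.E36
  have e45 := Stmt10Aux.E45
  have sf := Stmt10Aux.SF
  rw [hD]
  linarith
end

section
/- The coefficients d_n = (k+2)! (-1)^n (C(k+1,2) + n² H_{n,2})/n^{k+2} satisfy, for all n ≥ 2, (n+1)^{k+2} d_{n+1} + n^k (2n²+2n+1) d_n + (n−1)^k n² d_{n−1} + (−1)^n k(k+1)(k+2)! (2n²−1)/(2n²(n−1)²) = 0, with d_1 = −(1/2)(k²+k+2)(k+2)! and d_2 = (k²+k+10)(k+2)!/2^{k+3}. -/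
open scoped BigOperators

/-- Rational generalized harmonic number `H_{n,2}`. -/
def Hq2 (n : ℕ) : ℚ := ∑ m ∈ Finset.range n, 1 / (m + 1 : ℚ) ^ 2

lemma Hq2_succ (n : ℕ) : Hq2 (n + 1) = Hq2 n + 1 / (n + 1 : ℚ) ^ 2 := by
  simp [Hq2, Finset.sum_range_succ]

lemma choose_cast (k : ℕ) : (((k + 1).choose 2 : ℕ) : ℚ) = (k : ℚ) * (k + 1) / 2 := by
  rw [Nat.cast_choose_two]
  push_cast
  ring

set_option maxHeartbeats 2000000 in
theorem stmt14 (k : ℕ) (hk : 2 ≤ k) (d : ℕ → ℚ)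
    (hd : ∀ n, 1 ≤ n →
      d n = ((k + 2).factorial : ℚ) * (-1) ^ n
        * (((k + 1).choose 2 : ℚ) + (n : ℚ) ^ 2 * Hq2 n) / (n : ℚ) ^ (k + 2)) :
    d 1 = -(1 / 2) * ((k : ℚ) ^ 2 + (k : ℚ) + 2) * ((k + 2).factorial : ℚ) ∧
    d 2 = ((k : ℚ) ^ 2 + (k : ℚ) + 10) * ((k + 2).factorial : ℚ) / 2 ^ (k + 3) ∧
    ∀ n : ℕ, 2 ≤ n →
      ((n : ℚ) + 1) ^ (k + 2) * d (n + 1)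
        + (n : ℚ) ^ k * (2 * (n : ℚ) ^ 2 + 2 * n + 1) * d n
        + ((n : ℚ) - 1) ^ k * (n : ℚ) ^ 2 * d (n - 1)
        + (-1) ^ n * (k : ℚ) * ((k : ℚ) + 1) * ((k + 2).factorial : ℚ)
            * (2 * (n : ℚ) ^ 2 - 1) / (2 * (n : ℚ) ^ 2 * ((n : ℚ) - 1) ^ 2) = 0 := by
  refine ⟨?_, ?_, ?_⟩
  · rw [hd 1 le_rfl]
    simp only [Hq2_succ, choose_cast]
    norm_num [Hq2]
    ring
  · rw [hd 2 (by norm_num)]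
    simp only [Hq2_succ, choose_cast]
    norm_num [Hq2]
    rw [pow_succ]
    field_simp
    ring
  · intro n hn
    obtain ⟨m, rfl⟩ : ∃ m, n = m + 2 := ⟨n - 2, by omega⟩
    rw [hd (m + 2 + 1) (by omega), hd (m + 2) (by omega),
      show m + 2 - 1 = m + 1 from rfl, hd (m + 1) (by omega)]
    simp only [Hq2_succ, choose_cast]
    push_cast
    have h1 : (m : ℚ) + 1 ≠ 0 := by positivity
    have h2 : (m : ℚ) + 2 ≠ 0 := by positivity
    have h3 : (m : ℚ) + 3 ≠ 0 := by positivity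
    have e : ((m : ℚ) + 2 - 1) = (m : ℚ) + 1 := by ring
    simp only [e]
    field_simp
    ring
end
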